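/- arXiv:1901.09654 — 15 statements merged into one kernel-verified Lean document; each statement's English description precedes it below -/
import Mathlib

section
/- Let X be a semitopological group. Let f ∈ X, let F ⊆ X be finite, let L ⊆ X be nowhere dense, and let V ⊆ X be non-empty open. If (F·V) ∩ L = ∅, then there exists a non-empty open set V′ ⊆ V such that ((F ∪ {f})·V′) ∩ L = ∅. -/
open Pointwise

/- Translating back the nonempty open set `f • V \ closure L` (nonempty because `closure L` has
empty interior) gives `V' ⊆ V` with `f • V'` missing `L`; shrinking `V` keeps `F * V'` off `L`. -/

theorem IsNowhereDense.nonempty_diff_closure {X : Type*} [TopologicalSpace X] {L U : Set X}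
    (hL : IsNowhereDense L) (hU : IsOpen U) (hUne : U.Nonempty) : (U \ closure L).Nonempty :=
  (interior_eq_empty_iff_dense_compl.mp hL).inter_open_nonempty U hU hUne

theorem exists_isOpen_subset_smul_disjoint {G α : Type*} [Group G] [MulAction G α]
    [TopologicalSpace α] [ContinuousConstSMul G α] (g : G) {L V : Set α}
    (hL : IsNowhereDense L) (hV : IsOpen V) (hVne : V.Nonempty) :
    ∃ V' ⊆ V, IsOpen V' ∧ V'.Nonempty ∧ Disjoint (g • V') L := by
  set W := g • V \ closure L
  refine ⟨g⁻¹ • W, ?_, (hV.smul g |>.sdiff isClosed_closure).smul g⁻¹, ?_, ?_⟩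
  · exact Set.subset_smul_set_iff.mp Set.sdiff_subset
  · exact (hL.nonempty_diff_closure (hV.smul g) hVne.smul_set).smul_set
  · rw [smul_inv_smul]
    exact Set.disjoint_sdiff_left.mono_right subset_closure

theorem lemma1_extension_of_separation_general
    {X : Type*} [Group X] [TopologicalSpace X]
    (hleft : ∀ g : X, Continuous fun x => g * x)
    (f : X) (F : Set X)
    (L : Set X) (hL : IsNowhereDense L)
    (V : Set X) (hV : IsOpen V) (hVne : V.Nonempty)
    (hsep : (F * V) ∩ L = ∅) :
    ∃ V' : Set X, V' ⊆ V ∧ IsOpen V' ∧ V'.Nonempty ∧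
      ((F ∪ {f}) * V') ∩ L = ∅ := by
  have : ContinuousConstSMul X X := ⟨hleft⟩
  obtain ⟨V', hV'V, hV'open, hV'ne, hfV'⟩ := exists_isOpen_subset_smul_disjoint f hL hV hVne
  have hFV' : Disjoint (F * V') L :=
    (Set.disjoint_iff_inter_eq_empty.mpr hsep).mono_left (Set.mul_subset_mul_left hV'V)
  refine ⟨V', hV'V, hV'open, hV'ne, Set.disjoint_iff_inter_eq_empty.mp ?_⟩
  rw [Set.union_mul, Set.singleton_mul]
  exact hFV'.union_left hfV'

/-- **Extension of a separation** (Lemma 1).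
In a semitopological group `X` (a group with a topology in which all left and right
translations are continuous), for `f ∈ X`, a finite set `F ⊆ X`, a nowhere dense set `L`,
and a non-empty open set `V`, if `(F * V) ∩ L = ∅` then there is a non-empty open
`V' ⊆ V` with `((F ∪ {f}) * V') ∩ L = ∅`. -/
theorem lemma1_extension_of_separation
    {X : Type*} [Group X] [TopologicalSpace X]
    (hleft : ∀ g : X, Continuous fun x => g * x)
    (hright : ∀ g : X, Continuous fun x => x * g)
    (f : X) (F : Set X) (hF : F.Finite)
    (L : Set X) (hL : IsNowhereDense L)
    (V : Set X) (hV : IsOpen V) (hVne : V.Nonempty)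
    (hsep : (F * V) ∩ L = ∅) :
    ∃ V' : Set X, V' ⊆ V ∧ IsOpen V' ∧ V'.Nonempty ∧
      ((F ∪ {f}) * V') ∩ L = ∅ :=
  lemma1_extension_of_separation_general hleft f F L hL V hV hVne hsep
end

section
/- Let X be a semitopological group whose topology makes X a Baire space. If A ⊆ X is co-meagre (its complement is meagre) and {z_n}_{n∈ℕ} is a sequence in X converging to the identity 1_X, then there is a dense G_δ set H ⊆ A such that for every a ∈ H and every n ∈ ℕ, a·z_n ∈ A. -/
open Filter Topology

/-!
Right translation by `z n` is a homeomorphism, so it pulls the co-meagre set `A` back to a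
co-meagre set. Countably many co-meagre sets intersect in a co-meagre set, and in a Baire
space every co-meagre set contains a dense `G_δ`.
-/

theorem eventually_residual_forall_mem_of_isOpenMap {X Y ι : Type*} [TopologicalSpace X]
    [TopologicalSpace Y] [Countable ι] {f : ι → X → Y} (hc : ∀ i, Continuous (f i))
    (ho : ∀ i, IsOpenMap (f i)) {A : Set Y} (hA : A ∈ residual Y) :
    ∀ᶠ x in residual X, ∀ i, f i x ∈ A :=
  eventually_countable_forall.2 fun i => tendsto_residual_of_isOpenMap (hc i) (ho i) hA

theorem isOpenMap_mul_right_of_continuous {X : Type*} [Group X] [TopologicalSpace X]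
    (hright : ∀ g : X, Continuous fun x => x * g) (g : X) : IsOpenMap fun x => x * g :=
  Homeomorph.isOpenMap
    { Equiv.mulRight g with
      continuous_toFun := hright g
      continuous_invFun := hright g⁻¹ }

theorem theorem1_KBD_comeagre_general
    {X : Type*} [Group X] [TopologicalSpace X] [BaireSpace X]
    (hright : ∀ g : X, Continuous fun x => x * g)
    (A : Set X) (hA : IsMeagre Aᶜ)
    (z : ℕ → X) :
    ∃ H : Set X, H ⊆ A ∧ Dense H ∧ IsGδ H ∧
      ∀ a ∈ H, ∀ n : ℕ, a * z n ∈ A := by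
  have hA_residual : A ∈ residual X := by rwa [IsMeagre, compl_compl] at hA
  have htranslates : ∀ᶠ a in residual X, ∀ n, a * z n ∈ A :=
    eventually_residual_forall_mem_of_isOpenMap (fun n => hright (z n))
      (fun n => isOpenMap_mul_right_of_continuous hright (z n)) hA_residual
  obtain ⟨H, hGδ, hdense, hH⟩ := eventually_residual.1 (Eventually.and hA_residual htranslates)
  exact ⟨H, fun a ha => (hH a ha).1, hdense, hGδ, fun a ha => (hH a ha).2⟩

/-- **Theorem 1.** In a Baire semitopological group `X`, if `A` is co-meagre and
`z_n → 1_X` is a null sequence, then there is a dense `G_δ` set `H ⊆ A` such that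
`a * z_n ∈ A` for all `a ∈ H` and all `n`. -/
theorem theorem1_KBD_comeagre
    {X : Type*} [Group X] [TopologicalSpace X] [BaireSpace X]
    (hleft : ∀ g : X, Continuous fun x => g * x)
    (hright : ∀ g : X, Continuous fun x => x * g)
    (A : Set X) (hA : IsMeagre Aᶜ)
    (z : ℕ → X) (hz : Tendsto z atTop (𝓝 1)) :
    ∃ H : Set X, H ⊆ A ∧ Dense H ∧ IsGδ H ∧
      ∀ a ∈ H, ∀ n : ℕ, a * z n ∈ A :=
  theorem1_KBD_comeagre_general hright A hA z
end

section
/- Let X be a semitopological group whose topology makes X a Baire space. If {z_n}_{n∈ℕ} is a sequence in X converging to the identity 1_X and A ⊆ X is a non-meagre set with the Baire property, then the set of points a ∈ A for which there exists N = N(a) with a·z_m ∈ A for all m > N is equal to A minus a meagre set; in particular there exist a ∈ A and N ∈ ℕ with a·z_m ∈ A for all m > N. -/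
open Filter Topology

/-- **Theorem 2 (KBD).** In a Baire semitopological group `X`, if `z_n → 1_X` is a
null sequence and `A` is a non-meagre set with the Baire property, then the set of
points `a ∈ A` admitting `N` with `a * z_m ∈ A` for all `m > N` is `A` minus a meagre
set; in particular some `a ∈ A` and `N` satisfy `a * z_m ∈ A` for all `m > N`. -/
theorem theorem2_KBD
    {X : Type*} [Group X] [TopologicalSpace X] [BaireSpace X]
    (hleft : ∀ g : X, Continuous fun x => g * x)
    (hright : ∀ g : X, Continuous fun x => x * g)
    (z : ℕ → X) (hz : Tendsto z atTop (𝓝 1))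
    (A : Set X) (hA : ¬ IsMeagre A) (hABP : BaireMeasurableSet A) :
    (∃ M : Set X, IsMeagre M ∧
      {a ∈ A | ∃ N : ℕ, ∀ m > N, a * z m ∈ A} = A \ M) ∧
    ∃ a ∈ A, ∃ N : ℕ, ∀ m > N, a * z m ∈ A := by
  classical
  obtain ⟨U, hUopen, hAU⟩ := hABP.residualEq_isOpen
  -- the symmetric difference of A and U is meagre
  have hdiff : IsMeagre {x | ¬ (x ∈ A ↔ x ∈ U)} := by
    have : {x | x ∈ A ↔ x ∈ U} ∈ residual X := by
      filter_upwards [hAU] with x hx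
      change A x = U x at hx
      change A x ↔ U x
      rw [hx]
    simpa [IsMeagre, Set.compl_setOf] using this
  have hAsubU : IsMeagre (A \ U) :=
    hdiff.mono (fun x hx => by
      simp only [Set.mem_diff] at hx
      simp only [Set.mem_setOf_eq]
      tauto)
  have hUsubA : IsMeagre (U \ A) :=
    hdiff.mono (fun x hx => by
      simp only [Set.mem_diff] at hx
      simp only [Set.mem_setOf_eq]
      tauto)
  -- right translation is a homeomorphism, hence preimages of meagre sets are meagre
  have hmeagre_pre : ∀ g : X, IsMeagre ((fun x => x * g) ⁻¹' (U \ A)) := by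
    intro g
    have hopen : IsOpenMap fun x : X => x * g := by
      have h := (Homeomorph.mk (Equiv.mulRight g) (hright g) (hright g⁻¹)).isOpenMap
      exact h
    exact hUsubA.preimage_of_isOpenMap (hright g) hopen
  set S : Set X := {a ∈ A | ∃ N : ℕ, ∀ m > N, a * z m ∈ A} with hS
  set M' : Set X := (A \ U) ∪ ⋃ m : ℕ, (fun x => x * z m) ⁻¹' (U \ A) with hM'
  have hM'meagre : IsMeagre M' := by
    have h2 : IsMeagre (⋃ m : ℕ, (fun x => x * z m) ⁻¹' (U \ A)) :=
      isMeagre_iUnion fun m => hmeagre_pre (z m)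
    rw [hM', IsMeagre, Set.compl_union]
    exact Filter.inter_mem hAsubU h2
  -- A \ S ⊆ M'
  have hASsub : A \ S ⊆ M' := by
    intro a ha
    by_contra hMem
    simp only [hM', Set.mem_union, Set.mem_iUnion, not_or, not_exists] at hMem
    obtain ⟨hnAU, hnpre⟩ := hMem
    have haA : a ∈ A := ha.1
    have haU : a ∈ U := by
      by_contra h
      exact hnAU ⟨haA, h⟩
    -- a * z m → a, eventually in U
    have htend : Tendsto (fun m => a * z m) atTop (𝓝 a) := by
      have := (hleft a).continuousAt.tendsto.comp hz
      simpa [Function.comp_def] using this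
    have hev : ∀ᶠ m in atTop, a * z m ∈ U :=
      htend (hUopen.mem_nhds haU)
    obtain ⟨N, hN⟩ := eventually_atTop.mp hev
    have : a ∈ S := by
      refine ⟨haA, N, fun m hm => ?_⟩
      have hmU : a * z m ∈ U := hN m (le_of_lt hm)
      by_contra hA'
      exact hnpre m ⟨hmU, hA'⟩
    exact ha.2 this
  have hASmeagre : IsMeagre (A \ S) := hM'meagre.mono hASsub
  have hSsubA : S ⊆ A := fun a ha => ha.1
  have hSeq : S = A \ (A \ S) := by
    ext x
    simp only [Set.mem_diff]
    constructor
    · intro hx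
      exact ⟨hSsubA hx, fun h => h.2 hx⟩
    · intro ⟨hxA, hx⟩
      by_contra h
      exact hx ⟨hxA, h⟩
  refine ⟨⟨A \ S, hASmeagre, hSeq⟩, ?_⟩
  have hSne : S.Nonempty := by
    by_contra h
    rw [Set.not_nonempty_iff_eq_empty] at h
    apply hA
    refine hASmeagre.mono ?_
    rw [h]
    simp
  obtain ⟨a, haA, N, hN⟩ := hSne
  exact ⟨a, haA, N, hN⟩
end

section
/- There exist a set A ⊆ ℝ and an additive function f : ℝ → ℝ such that f is bounded above on A, f is not continuous, and d(A) = A − A = ℝ. (Hence the class SW is not contained in the class BC.) -/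
open Pointwise

/-- **Theorem 3(i), first part.** There exist a set `A ⊆ ℝ` and an additive function
`f : ℝ → ℝ` such that `f` is bounded above on `A`, `f` is not continuous, and
`d(A) = A - A = ℝ`. Hence `SW ⊄ BC`. -/
theorem SW_not_subset_BC :
    ∃ (A : Set ℝ) (f : ℝ → ℝ),
      (∀ x y : ℝ, f (x + y) = f x + f y) ∧
      (∃ B : ℝ, ∀ a ∈ A, f a ≤ B) ∧
      ¬ Continuous f ∧
      A - A = Set.univ := by
  classical
  -- {1, √2} is linearly independent over ℚ
  have hsq : Irrational (Real.sqrt 2) := irrational_sqrt_two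
  have li0 : LinearIndependent ℚ ![(1:ℝ), Real.sqrt 2] := by
    rw [LinearIndependent.pair_iff]
    intro s t hst
    have ht : t = 0 := by
      by_contra ht
      apply hsq
      refine ⟨-s / t, ?_⟩
      push_cast
      have : (s:ℝ) + t * Real.sqrt 2 = 0 := by
        simpa [Rat.smul_def] using hst
      field_simp
      linarith
    subst ht
    simp [Rat.smul_def] at hst
    exact ⟨by exact_mod_cast hst, rfl⟩
  set s : Set ℝ := Set.range ![(1:ℝ), Real.sqrt 2] with hs
  have li : LinearIndepOn ℚ id s := li0.linearIndepOn_id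
  let b := Module.Basis.extend li
  have h1s : (1:ℝ) ∈ li.extend (Set.subset_univ s) := by
    apply li.subset_extend
    exact ⟨0, rfl⟩
  have h2s : Real.sqrt 2 ∈ li.extend (Set.subset_univ s) := by
    apply li.subset_extend
    exact ⟨1, rfl⟩
  let j : li.extend (Set.subset_univ s) := ⟨Real.sqrt 2, h2s⟩
  let i : li.extend (Set.subset_univ s) := ⟨(1:ℝ), h1s⟩
  let f : ℝ → ℝ := fun x => ((b.coord j x : ℚ) : ℝ)
  have hadd : ∀ x y : ℝ, f (x + y) = f x + f y := by
    intro x y; simp [f, map_add]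
  have hsmul : ∀ (q : ℚ) (x : ℝ), f ((q:ℝ) * x) = q * f x := by
    intro q x
    have h1 : f (q • x) = q * f x := by
      simp only [f, Module.Basis.coord_apply, map_smul, Finsupp.smul_apply, smul_eq_mul]
      push_cast; ring
    simpa [Rat.smul_def] using h1
  have hbj : b j = Real.sqrt 2 := Module.Basis.extend_apply_self li j
  have hbi : b i = 1 := Module.Basis.extend_apply_self li i
  have hij : i ≠ j := by
    intro h
    apply hsq
    have : (1:ℝ) = Real.sqrt 2 := congrArg Subtype.val h
    exact ⟨1, by push_cast; linarith⟩
  have hfj : f (Real.sqrt 2) = 1 := by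
    have := b.repr_self j
    simp [f, Module.Basis.coord_apply, ← hbj, this]
  have hfi : f 1 = 0 := by
    have := b.repr_self i
    simp [f, Module.Basis.coord_apply, ← hbi, this, Finsupp.single_apply, hij.symm]
  -- f is not continuous
  have hnc : ¬ Continuous f := by
    intro hc
    -- f agrees with x ↦ x * f 1 = 0 on ℚ, dense
    have hq : ∀ q : ℚ, f (q:ℝ) = 0 := by
      intro q
      have := hsmul q 1
      simpa [hfi] using this
    have : f = fun _ => 0 := by
      apply Continuous.ext_on Rat.denseRange_cast hc continuous_const
      rintro _ ⟨q, rfl⟩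
      exact hq q
    rw [this] at hfj
    norm_num at hfj
  refine ⟨{x | f x ≤ 0}, f, hadd, ⟨0, fun a ha => ha⟩, hnc, ?_⟩
  ext r
  simp only [Set.mem_univ, iff_true]
  obtain ⟨q, hq⟩ := exists_rat_lt (min (-(f r)) 0)
  refine ⟨r + (q:ℝ) * Real.sqrt 2, ?_, (q:ℝ) * Real.sqrt 2, ?_, by ring⟩
  · have : f (r + (q:ℝ) * Real.sqrt 2) = f r + q := by
      rw [hadd, hsmul, hfj]; ring
    simp only [Set.mem_setOf_eq, this]
    have := lt_min_iff.mp hq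
    linarith [this.1]
  · have : f ((q:ℝ) * Real.sqrt 2) = q := by rw [hsmul, hfj]; ring
    simp only [Set.mem_setOf_eq, this]
    have := lt_min_iff.mp hq
    linarith [this.2]
end

section
/- There exists a set A ⊆ ℝ such that d(A) = A − A contains no non-empty open interval, yet every additive function f : ℝ → ℝ that is bounded above on A is continuous. (Hence the class BC is not contained in the class SW.) -/
open Pointwise Filter

noncomputable section BCSW
namespace BCSW

def bit (b : Bool) : ℝ := if b then 1 else 0

lemma bit_nonneg (b) : 0 ≤ bit b := by cases b <;> simp [bit]
lemma bit_le_one (b) : bit b ≤ 1 := by cases b <;> simp [bit]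

def term (s : ℕ → Bool) (i : ℕ) : ℝ := bit (s i) * (1/4:ℝ)^(i+1)

lemma geom_summable : Summable (fun i : ℕ => (1/4:ℝ)^(i+1)) := by
  exact (summable_nat_add_iff 1).2
    (summable_geometric_of_lt_one (by norm_num) (by norm_num))

lemma geom_tsum : ∑' i : ℕ, (1/4:ℝ)^(i+1) = 1/3 := by
  have h : ∑' i : ℕ, (1/4:ℝ)^i * (1/4) = (∑' i : ℕ, (1/4:ℝ)^i) * (1/4) :=
    tsum_mul_right
  have hg : ∑' i : ℕ, (1/4:ℝ)^i = (1 - 1/4)⁻¹ :=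
    tsum_geometric_of_lt_one (by norm_num) (by norm_num)
  calc ∑' i : ℕ, (1/4:ℝ)^(i+1) = ∑' i : ℕ, (1/4:ℝ)^i * (1/4) := by
        simp [pow_succ]
    _ = (1 - 1/4 : ℝ)⁻¹ * (1/4) := by rw [h, hg]
    _ = 1/3 := by norm_num

lemma term_summable (s : ℕ → Bool) : Summable (term s) := by
  refine Summable.of_nonneg_of_le (fun i => ?_) (fun i => ?_) geom_summable
  · exact mul_nonneg (bit_nonneg _) (by positivity)
  · exact mul_le_of_le_one_left (by positivity) (bit_le_one _)

def gfun (s : ℕ → Bool) : ℝ := ∑' i, term s i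

def Aset : Set ℝ := Set.range gfun

lemma tail_bound (e : ℕ → ℝ) (he : ∀ i, |e i| ≤ (1/4:ℝ)^(i+1)) (hsum : Summable e)
    (n : ℕ) : |∑' i, e (i + n)| ≤ (1/4:ℝ)^n * (1/3) := by
  have hpow : ∀ i : ℕ, (1/4:ℝ)^(i + n + 1) = (1/4:ℝ)^n * (1/4)^(i+1) := by
    intro i; rw [← pow_add]; congr 1; omega
  have hb : Summable (fun i : ℕ => (1/4:ℝ)^(i + n + 1)) := by
    have := geom_summable.mul_left ((1/4:ℝ)^n)
    refine this.congr (fun i => ?_)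
    rw [hpow]
  have habs : Summable (fun i : ℕ => |e (i + n)|) :=
    Summable.of_nonneg_of_le (fun i => abs_nonneg _) (fun i => he _) hb
  have hs2 : Summable (fun i => e (i + n)) := (summable_nat_add_iff n).2 hsum
  calc |∑' i, e (i + n)| ≤ ∑' i, |e (i + n)| := by
        rw [← Real.norm_eq_abs]
        refine norm_tsum_le_tsum_norm ?_
        simpa [Real.norm_eq_abs] using habs
    _ ≤ ∑' i : ℕ, (1/4:ℝ)^(i + n + 1) := Summable.tsum_le_tsum (fun i => he _) habs hb
    _ = (1/4:ℝ)^n * ∑' i : ℕ, (1/4:ℝ)^(i+1) := by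
        rw [← tsum_mul_left]; exact tsum_congr (fun i => by rw [hpow])
    _ = (1/4:ℝ)^n * (1/3) := by rw [geom_tsum]

lemma diff_approx (s t : ℕ → Bool) (n : ℕ) :
    |gfun s - gfun t - ∑ i ∈ Finset.range n, (bit (s i) - bit (t i)) * (1/4:ℝ)^(i+1)|
      ≤ (1/4:ℝ)^n * (1/3) := by
  set e : ℕ → ℝ := fun i => (bit (s i) - bit (t i)) * (1/4:ℝ)^(i+1) with he_def
  have hsum : Summable e := by
    have : e = fun i => term s i - term t i := by
      funext i; simp [he_def, term, sub_mul]
    rw [this]; exact (term_summable s).sub (term_summable t)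
  have hgs : gfun s - gfun t = ∑' i, e i := by
    rw [gfun, gfun, ← Summable.tsum_sub (term_summable s) (term_summable t)]
    congr 1; funext i; simp [he_def, term, sub_mul]
  have hsplit := Summable.sum_add_tsum_nat_add (f := e) n hsum
  have : gfun s - gfun t - ∑ i ∈ Finset.range n, e i = ∑' i, e (i + n) := by
    rw [hgs, ← hsplit]; ring
  rw [this]
  refine tail_bound e (fun i => ?_) hsum n
  have h1 : |bit (s i) - bit (t i)| ≤ 1 := by
    cases hs : s i <;> cases ht : t i <;> norm_num [bit]
  calc |e i| = |bit (s i) - bit (t i)| * (1/4:ℝ)^(i+1) := by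
        rw [he_def, abs_mul, abs_of_nonneg (by positivity : (0:ℝ) ≤ (1/4:ℝ)^(i+1))]
    _ ≤ 1 * (1/4:ℝ)^(i+1) := by gcongr
    _ = (1/4:ℝ)^(i+1) := one_mul _

def vmap : Fin 3 → ℝ := fun k => (k : ℝ) - 1

def dd (a b : Bool) : Fin 3 := if a = b then 1 else if a then 2 else 0

lemma vmap_dd (a b : Bool) : vmap (dd a b) = bit a - bit b := by
  cases a <;> cases b <;> norm_num [vmap, dd, bit]

def center (n : ℕ) (d : Fin n → Fin 3) : ℝ := ∑ i : Fin n, vmap (d i) * (1/4:ℝ)^((i:ℕ)+1)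

def cover (n : ℕ) : Set ℝ :=
  ⋃ d : Fin n → Fin 3,
    Set.Icc (center n d - (1/4:ℝ)^n * (1/3)) (center n d + (1/4:ℝ)^n * (1/3))

lemma sub_subset_cover (n : ℕ) : Aset - Aset ⊆ cover n := by
  rintro x ⟨a, ⟨s, rfl⟩, b, ⟨t, rfl⟩, rfl⟩
  refine Set.mem_iUnion.2 ⟨fun i => dd (s i) (t i), ?_⟩
  have h := diff_approx s t n
  have hc : center n (fun i => dd (s i) (t i))
      = ∑ i ∈ Finset.range n, (bit (s i) - bit (t i)) * (1/4:ℝ)^(i+1) := by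
    rw [center, Fin.sum_univ_eq_sum_range (fun i => vmap (dd (s i) (t i)) * (1/4:ℝ)^(i+1))]
    exact Finset.sum_congr rfl (fun i _ => by rw [vmap_dd])
  show gfun s - gfun t ∈ Set.Icc _ _
  rw [Set.mem_Icc, hc]
  obtain ⟨h1, h2⟩ := abs_le.1 h
  constructor <;> linarith

lemma volume_sub_le (n : ℕ) :
    MeasureTheory.volume (Aset - Aset) ≤ ENNReal.ofReal ((2/3) * (3/4:ℝ)^n) := by
  refine le_trans (MeasureTheory.measure_mono (sub_subset_cover n)) ?_
  refine le_trans (MeasureTheory.measure_iUnion_fintype_le _ _) ?_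
  have hvol : ∀ d : Fin n → Fin 3,
      MeasureTheory.volume (Set.Icc (center n d - (1/4:ℝ)^n * (1/3))
        (center n d + (1/4:ℝ)^n * (1/3))) = ENNReal.ofReal ((2/3) * (1/4:ℝ)^n) := by
    intro d
    rw [Real.volume_Icc]
    congr 1; ring
  have hcalc : ∑ d : Fin n → Fin 3, MeasureTheory.volume (Set.Icc (center n d - (1/4:ℝ)^n * (1/3))
        (center n d + (1/4:ℝ)^n * (1/3)))
      = ENNReal.ofReal ((2/3) * (3/4:ℝ)^n) := by
    calc ∑ d : Fin n → Fin 3, MeasureTheory.volume (Set.Icc (center n d - (1/4:ℝ)^n * (1/3))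
          (center n d + (1/4:ℝ)^n * (1/3)))
        = (3^n : ℕ) * ENNReal.ofReal ((2/3) * (1/4:ℝ)^n) := by
          rw [Finset.sum_congr rfl (fun d _ => hvol d), Finset.sum_const, Finset.card_univ,
            Fintype.card_fun, Fintype.card_fin, Fintype.card_fin, nsmul_eq_mul]
      _ = ENNReal.ofReal (((3^n : ℕ) : ℝ)) * ENNReal.ofReal ((2/3) * (1/4:ℝ)^n) := by
          norm_cast
      _ = ENNReal.ofReal (((3^n : ℕ) : ℝ) * ((2/3) * (1/4:ℝ)^n)) := by
          rw [← ENNReal.ofReal_mul (by positivity)]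
      _ = ENNReal.ofReal ((2/3) * (3/4:ℝ)^n) := by
          congr 1
          push_cast
          rw [show (3/4:ℝ)^n = 3^n * (1/4)^n by rw [← mul_pow]; norm_num]
          ring
  exact hcalc.le
    
lemma volume_sub_zero : MeasureTheory.volume (Aset - Aset) = 0 := by
  refine le_antisymm ?_ zero_le
  have ht : Tendsto (fun n : ℕ => ENNReal.ofReal ((2/3) * (3/4:ℝ)^n)) atTop (nhds 0) := by
    have : Tendsto (fun n : ℕ => (2/3) * (3/4:ℝ)^n) atTop (nhds 0) := by
      simpa using (tendsto_pow_atTop_nhds_zero_of_lt_one (by norm_num) (by norm_num)).const_mul (2/3:ℝ)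
    simpa [ENNReal.ofReal_zero] using (ENNReal.tendsto_ofReal this)
  exact ge_of_tendsto' ht (fun n => volume_sub_le n)

-- Part 2: every x in (0,1) is a sum of three elements of Aset

def useq (x : ℝ) : ℕ → ℝ
  | 0 => x
  | n+1 => Int.fract (4 * useq x n)

def dig (x : ℝ) (n : ℕ) : ℕ := (⌊4 * useq x n⌋).toNat

lemma useq_mem {x : ℝ} (hx : x ∈ Set.Ico (0:ℝ) 1) : ∀ n, useq x n ∈ Set.Ico (0:ℝ) 1
  | 0 => hx
  | n+1 => ⟨Int.fract_nonneg _, Int.fract_lt_one _⟩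

lemma floor_bounds {x : ℝ} (hx : x ∈ Set.Ico (0:ℝ) 1) (n : ℕ) :
    0 ≤ ⌊4 * useq x n⌋ ∧ ⌊4 * useq x n⌋ < 4 := by
  obtain ⟨h0, h1⟩ := useq_mem hx n
  constructor
  · exact Int.floor_nonneg.2 (by linarith)
  · exact Int.floor_lt.2 (by push_cast; linarith)

lemma dig_cast {x : ℝ} (hx : x ∈ Set.Ico (0:ℝ) 1) (n : ℕ) :
    (dig x n : ℝ) = (⌊4 * useq x n⌋ : ℝ) := by
  have h := (floor_bounds hx n).1
  rw [dig]
  exact_mod_cast congrArg (fun z : ℤ => (z : ℝ)) (Int.toNat_of_nonneg h)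

lemma dig_le_three {x : ℝ} (hx : x ∈ Set.Ico (0:ℝ) 1) (n : ℕ) : dig x n ≤ 3 := by
  have h := floor_bounds hx n
  rw [dig]; omega

lemma useq_succ (x : ℝ) (n : ℕ) :
    useq x (n+1) = 4 * useq x n - (⌊4 * useq x n⌋ : ℝ) := by
  rw [useq, Int.fract]

lemma partial_eq {x : ℝ} (hx : x ∈ Set.Ico (0:ℝ) 1) (n : ℕ) :
    x = (∑ i ∈ Finset.range n, (dig x i : ℝ) * (1/4:ℝ)^(i+1)) + useq x n * (1/4:ℝ)^n := by
  induction n with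
  | zero => simp [useq]
  | succ n ih =>
    have h1 : useq x n * (1/4:ℝ)^n
        = (dig x n : ℝ) * (1/4:ℝ)^(n+1) + useq x (n+1) * (1/4:ℝ)^(n+1) := by
      rw [useq_succ, dig_cast hx]
      rw [pow_succ]
      ring
    calc x = (∑ i ∈ Finset.range n, (dig x i : ℝ) * (1/4:ℝ)^(i+1))
          + useq x n * (1/4:ℝ)^n := ih
      _ = (∑ i ∈ Finset.range (n+1), (dig x i : ℝ) * (1/4:ℝ)^(i+1))
          + useq x (n+1) * (1/4:ℝ)^(n+1) := by
          rw [Finset.sum_range_succ, h1]; ring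

lemma dig_summable {x : ℝ} (hx : x ∈ Set.Ico (0:ℝ) 1) :
    Summable (fun i => (dig x i : ℝ) * (1/4:ℝ)^(i+1)) := by
  refine Summable.of_nonneg_of_le (fun i => by positivity) (fun i => ?_)
    (geom_summable.mul_left 3)
  have := dig_le_three hx i
  have h3 : (dig x i : ℝ) ≤ 3 := by exact_mod_cast this
  calc (dig x i : ℝ) * (1/4:ℝ)^(i+1) ≤ 3 * (1/4:ℝ)^(i+1) := by
        apply mul_le_mul_of_nonneg_right h3 (by positivity)
    _ = 3 * (1/4:ℝ)^(i+1) := rfl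

lemma tsum_dig {x : ℝ} (hx : x ∈ Set.Ico (0:ℝ) 1) :
    ∑' i, (dig x i : ℝ) * (1/4:ℝ)^(i+1) = x := by
  have hsum := dig_summable hx
  have h1 : Tendsto (fun n => ∑ i ∈ Finset.range n, (dig x i : ℝ) * (1/4:ℝ)^(i+1)) atTop
      (nhds (∑' i, (dig x i : ℝ) * (1/4:ℝ)^(i+1))) := hsum.hasSum.tendsto_sum_nat
  have h2 : Tendsto (fun n => ∑ i ∈ Finset.range n, (dig x i : ℝ) * (1/4:ℝ)^(i+1)) atTop
      (nhds x) := by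
    have hpow : Tendsto (fun n : ℕ => (1/4:ℝ)^n) atTop (nhds 0) :=
      tendsto_pow_atTop_nhds_zero_of_lt_one (by norm_num) (by norm_num)
    have hu : Tendsto (fun n => useq x n * (1/4:ℝ)^n) atTop (nhds 0) := by
      refine squeeze_zero (fun n => ?_) (fun n => ?_) hpow
      · exact mul_nonneg (useq_mem hx n).1 (by positivity)
      · calc useq x n * (1/4:ℝ)^n ≤ 1 * (1/4:ℝ)^n :=
              mul_le_mul_of_nonneg_right (le_of_lt (useq_mem hx n).2) (by positivity)
          _ = (1/4:ℝ)^n := one_mul _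
    have := (tendsto_const_nhds (x := x) (f := atTop)).sub hu
    rw [sub_zero] at this
    refine this.congr (fun n => ?_)
    have := partial_eq hx n
    linarith
  exact tendsto_nhds_unique h1 h2

lemma exists_three_sum {x : ℝ} (hx : x ∈ Set.Ioo (0:ℝ) 1) :
    ∃ p q w : ℕ → Bool, gfun p + gfun q + gfun w = x := by
  have hx' : x ∈ Set.Ico (0:ℝ) 1 := ⟨le_of_lt hx.1, hx.2⟩
  refine ⟨fun i => decide (1 ≤ dig x i), fun i => decide (2 ≤ dig x i),
    fun i => decide (3 ≤ dig x i), ?_⟩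
  have hterm : ∀ i, term (fun i => decide (1 ≤ dig x i)) i
      + term (fun i => decide (2 ≤ dig x i)) i + term (fun i => decide (3 ≤ dig x i)) i
      = (dig x i : ℝ) * (1/4:ℝ)^(i+1) := by
    intro i
    have h3 := dig_le_three hx' i
    rw [term, term, term]
    have : bit (decide (1 ≤ dig x i)) + bit (decide (2 ≤ dig x i))
        + bit (decide (3 ≤ dig x i)) = (dig x i : ℝ) := by
      rcases (by omega : dig x i = 0 ∨ dig x i = 1 ∨ dig x i = 2 ∨ dig x i = 3) with
        h | h | h | h <;> rw [h] <;> norm_num [bit]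
    rw [← this]; ring
  rw [gfun, gfun, gfun, ← Summable.tsum_add (term_summable _) (term_summable _),
    ← Summable.tsum_add ((term_summable _).add (term_summable _)) (term_summable _)]
  exact (tsum_congr hterm).trans (tsum_dig hx')

-- Part 3: additive functions bounded above on (0,1) are continuous

lemma map_zero_of_additive (f : ℝ → ℝ) (hf : ∀ x y : ℝ, f (x + y) = f x + f y) :
    f 0 = 0 := by
  have := hf 0 0; simp at this; linarith

lemma map_neg_of_additive (f : ℝ → ℝ) (hf : ∀ x y : ℝ, f (x + y) = f x + f y) (x : ℝ) :
    f (-x) = - f x := by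
  have := hf x (-x)
  rw [add_neg_cancel, map_zero_of_additive f hf] at this
  linarith

lemma map_nsmul_of_additive (f : ℝ → ℝ) (hf : ∀ x y : ℝ, f (x + y) = f x + f y) (n : ℕ)
    (x : ℝ) : f ((n : ℝ) * x) = n * f x := by
  induction n with
  | zero => simpa using map_zero_of_additive f hf
  | succ n ih =>
    have : ((n:ℝ)+1) * x = (n:ℝ) * x + x := by ring
    push_cast
    rw [this, hf, ih]; ring

lemma continuous_of_bddAbove_Ioo (f : ℝ → ℝ) (hf : ∀ x y : ℝ, f (x + y) = f x + f y)
    (M : ℝ) (hM : ∀ x ∈ Set.Ioo (0:ℝ) 1, f x ≤ M) : Continuous f := by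
  set K : ℝ := |M| + |M - f (1/2)| with hK_def
  have hK0 : 0 ≤ K := by positivity
  have hbound : ∀ x : ℝ, 0 < x → x < 1/2 → |f x| ≤ K := by
    intro x hx1 hx2
    have hup : f x ≤ M := hM x ⟨hx1, by linarith⟩
    have h2 : f (1/2 - x) ≤ M := hM _ ⟨by linarith, by linarith⟩
    have h3 : f (1/2 : ℝ) = f x + f (1/2 - x) := by
      rw [← hf]; norm_num
    have hlo : f (1/2) - M ≤ f x := by linarith
    rw [abs_le]
    constructor
    · have h5 := le_abs_self (M - f (1/2))
      have h6 := abs_nonneg M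
      rw [hK_def]; linarith
    · have h5 := le_abs_self M
      have h6 := abs_nonneg (M - f (1/2))
      rw [hK_def]; linarith
  have hbound' : ∀ x : ℝ, x ≠ 0 → |x| < 1/2 → |f x| ≤ K := by
    intro x hx0 hxlt
    rcases lt_or_gt_of_ne hx0 with h | h
    · have := hbound (-x) (by linarith) (by rw [abs_of_neg h] at hxlt; linarith)
      rw [map_neg_of_additive f hf, abs_neg] at this
      exact this
    · exact hbound x h (by rw [abs_of_pos h] at hxlt; linarith)
  have htend : Tendsto f (nhds 0) (nhds 0) := by
    rw [Metric.tendsto_nhds_nhds]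
    intro ε hε
    obtain ⟨n, hn⟩ := exists_nat_gt (K / ε)
    have hn1 : 1 ≤ n := by
      by_contra h
      push_neg at h
      interval_cases n
      · simp at hn
        nlinarith [div_nonneg hK0 (le_of_lt hε)]
    have hnpos : (0:ℝ) < n := by exact_mod_cast hn1
    have hKn : K < n * ε := by
      have := (div_lt_iff₀ hε).1 hn
      linarith
    refine ⟨1 / (2 * n), by positivity, ?_⟩
    intro x hx
    rw [Real.dist_eq, sub_zero] at hx
    rw [Real.dist_eq, sub_zero]
    rcases eq_or_ne x 0 with rfl | hx0
    · rw [map_zero_of_additive f hf]; simpa using hε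
    · have hnx : |(n:ℝ) * x| < 1/2 := by
        rw [abs_mul, abs_of_pos hnpos]
        calc (n:ℝ) * |x| < (n:ℝ) * (1/(2*n)) := by
              apply mul_lt_mul_of_pos_left hx hnpos
          _ = 1/2 := by field_simp
      have hfx : |f ((n:ℝ) * x)| ≤ K :=
        hbound' _ (by positivity) hnx
      rw [map_nsmul_of_additive f hf, abs_mul, abs_of_pos hnpos] at hfx
      have h7 : |f x| ≤ K / n := (le_div_iff₀ hnpos).2 (by linarith)
      have h8 : K / n < ε := by rw [div_lt_iff₀ hnpos]; linarith
      linarith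
  rw [continuous_iff_continuousAt]
  intro x
  have h1 : Tendsto (fun y : ℝ => y - x) (nhds x) (nhds 0) := by
    have h := ((continuous_id.sub (continuous_const (y := x))).tendsto x)
    convert h using 2 <;> simp
  have h2 : Tendsto (fun y => f (y - x) + f x) (nhds x) (nhds (0 + f x)) :=
    (htend.comp h1).add tendsto_const_nhds
  rw [zero_add] at h2
  refine h2.congr (fun y => ?_)
  rw [← hf, sub_add_cancel]

end BCSW
end BCSW

open Pointwise

/-- **Theorem 3(i), second part.** There exists `A ⊆ ℝ` such that `A - A` contains no
non-empty open interval, yet every additive `f : ℝ → ℝ` bounded above on `A` is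
continuous. Hence `BC ⊄ SW`. -/
theorem BC_not_subset_SW :
    ∃ A : Set ℝ,
      (¬ ∃ a b : ℝ, a < b ∧ Set.Ioo a b ⊆ A - A) ∧
      (∀ f : ℝ → ℝ, (∀ x y : ℝ, f (x + y) = f x + f y) →
        (∃ B : ℝ, ∀ a ∈ A, f a ≤ B) → Continuous f) := by
  refine ⟨BCSW.Aset, ?_, ?_⟩
  · rintro ⟨a, b, hab, hsub⟩
    have h1 : MeasureTheory.volume (Set.Ioo a b) ≤ 0 := by
      rw [← BCSW.volume_sub_zero]
      exact MeasureTheory.measure_mono hsub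
    rw [Real.volume_Ioo] at h1
    have h2 : (0:ENNReal) < ENNReal.ofReal (b - a) :=
      ENNReal.ofReal_pos.2 (sub_pos.2 hab)
    exact absurd h1 (not_le.2 h2)
  · rintro f hf ⟨B, hB⟩
    refine BCSW.continuous_of_bddAbove_Ioo f hf (B + B + B) ?_
    intro x hx
    obtain ⟨p, q, w, hpqw⟩ := BCSW.exists_three_sum hx
    have hfx : f x = f (BCSW.gfun p) + f (BCSW.gfun q) + f (BCSW.gfun w) := by
      rw [← hpqw, hf, hf]
    rw [hfx]
    have h1 := hB _ ⟨p, rfl⟩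
    have h2 := hB _ ⟨q, rfl⟩
    have h3 := hB _ ⟨w, rfl⟩
    linarith
end

section
/- There exists a set B ⊆ ℝ that belongs to the class Emb but is not shift-compact: for every finite set F ⊆ ℝ there exist m ≠ 0 and c ∈ ℝ with {m·x + c : x ∈ F} ⊆ B, yet B is not shift-compact. -/
open Filter Topology

/-- `A ⊆ ℝ` is shift-compact: for every null sequence `z_n → 0` there are `a ∈ A` and
an infinite `M ⊆ ℕ` with `a + z_m ∈ A` for all `m ∈ M`. -/
def ShiftCompact (A : Set ℝ) : Prop :=
  ∀ z : ℕ → ℝ, Tendsto z atTop (𝓝 0) →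
    ∃ a ∈ A, ∃ M : Set ℕ, M.Infinite ∧ ∀ m ∈ M, a + z m ∈ A

/-- `A ⊆ ℝ` is in the class `Emb`: every finite set embeds in `A` under some injective
affine map `x ↦ m·x + c`, `m ≠ 0`. -/
def MemEmb (A : Set ℝ) : Prop :=
  ∀ F : Set ℝ, F.Finite → ∃ m c : ℝ, m ≠ 0 ∧ (fun x => m * x + c) '' F ⊆ A

section aux

noncomputable def sqrt2indep :
    LinearIndepOn ℚ id ({Real.sqrt 2} : Set ℝ) :=
  (linearIndepOn_singleton_iff ℚ).mpr (by norm_num)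

noncomputable def myBasis : Module.Basis (sqrt2indep.extend (Set.subset_univ _)) ℚ ℝ :=
  Module.Basis.extend sqrt2indep

noncomputable def sqrt2idx : sqrt2indep.extend (Set.subset_univ _) :=
  ⟨Real.sqrt 2, sqrt2indep.subset_extend _ rfl⟩

noncomputable def phi : ℝ →ₗ[ℚ] ℚ := myBasis.coord sqrt2idx

lemma phi_sqrt2 : phi (Real.sqrt 2) = 1 := by
  have h : myBasis sqrt2idx = Real.sqrt 2 := Module.Basis.extend_apply_self _ _
  have := myBasis.repr_self sqrt2idx
  have h2 := myBasis.repr_self sqrt2idx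
  rw [h] at h2
  simp only [phi, Module.Basis.coord_apply, h2, Finsupp.single_eq_same]

end aux

/-- **Theorem 3(ii), Part 1.** There is a set in `Emb` which is not shift-compact. -/
theorem Emb_not_subset_SC : ∃ B : Set ℝ, MemEmb B ∧ ¬ ShiftCompact B := by
  refine ⟨{x : ℝ | phi x = 0}, ?_, ?_⟩
  · -- Emb
    intro F hF
    -- the linear map m ↦ (φ (m * x))_{x ∈ F}
    set ι := hF.toFinset
    let ψ : ℝ →ₗ[ℚ] (ι → ℚ) :=
      LinearMap.pi (fun x : ι => phi.comp (LinearMap.mulRight ℚ (x : ℝ)))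
    have hker : LinearMap.ker ψ ≠ ⊥ := by
      intro hbot
      have hinj : Function.Injective ψ := LinearMap.ker_eq_bot.mp hbot
      have hrank := LinearMap.rank_le_of_injective ψ hinj
      have hfin : Module.rank ℚ (ι → ℚ) < Cardinal.aleph0 := Module.rank_lt_aleph0 ℚ _
      rw [Real.rank_rat_real] at hrank
      exact absurd (lt_of_le_of_lt hrank hfin)
        (not_lt.mpr (le_trans Cardinal.aleph0_le_continuum le_rfl)).elim
    obtain ⟨m, hm, hm0⟩ := Submodule.exists_mem_ne_zero_of_ne_bot hker
    refine ⟨m, 0, hm0, ?_⟩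
    rintro _ ⟨x, hx, rfl⟩
    have hx' : (⟨x, hF.mem_toFinset.mpr hx⟩ : ι) ∈ Finset.univ := Finset.mem_univ _
    have : ψ m = 0 := LinearMap.mem_ker.mp hm
    have := congrFun this (⟨x, hF.mem_toFinset.mpr hx⟩ : ι)
    simpa [ψ, LinearMap.mulRight_apply, mul_comm] using this
  · -- not shift-compact
    intro hSC
    have hz : Tendsto (fun m : ℕ => Real.sqrt 2 * (1 / 2 : ℝ) ^ m) atTop (𝓝 0) := by
      have := tendsto_pow_atTop_nhds_zero_of_lt_one
        (by norm_num : (0:ℝ) ≤ 1/2) (by norm_num : (1/2:ℝ) < 1)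
      simpa using this.const_mul (Real.sqrt 2)
    obtain ⟨a, ha, M, hM, hmem⟩ := hSC _ hz
    obtain ⟨m, hm⟩ := hM.nonempty
    have h1 : phi a = 0 := ha
    have h2 : phi (a + Real.sqrt 2 * (1 / 2 : ℝ) ^ m) = 0 := hmem m hm
    have key : Real.sqrt 2 * (1 / 2 : ℝ) ^ m = ((1/2 : ℚ) ^ m : ℚ) • Real.sqrt 2 := by
      push_cast [Rat.smul_def]
      ring
    rw [map_add, h1, zero_add, key, map_smul, phi_sqrt2, smul_eq_mul, mul_one] at h2
    exact absurd h2 (by positivity)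
end

section
/- There exists a shift-compact set B ⊆ ℝ containing no subset similar to {1,2,3}: B is shift-compact, and there are no m ≠ 0 and c ∈ ℝ with {m + c, 2m + c, 3m + c} ⊆ B. (Hence B is not in the class Emb.) -/
open Filter Topology

open Set Cardinal Pointwise

universe u

/-!
Enumerate the null sequences as `(z i)` along the initial ordinal of `𝔠` and build `B` as an
increasing union of 3AP-free sets. Stage `i` adds a translate `a + T` of
`T = {0} ∪ {z i m : m ∈ M}`, where `M` is chosen so that the `|z i m|` shrink by a factor of `4`
at each step, which makes `T` 3AP-free. Fewer than `𝔠` points are present before stage `i`, so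
`a` can be taken outside the field they generate together with `T`; then no 3-term progression
mixes old points with new ones. Thus `B` is 3AP-free, hence contains no copy of `{1, 2, 3}`, and
it contains `a` and `a + z i m` for `m ∈ M`, hence is shift-compact.
-/

theorem ThreeAPFree.not_similar_one_two_three {B : Set ℝ} (hB : ThreeAPFree B) :
    ¬ ∃ m c : ℝ, m ≠ 0 ∧ ({m + c, 2 * m + c, 3 * m + c} : Set ℝ) ⊆ B := by
  rintro ⟨m, c, hm, hsub⟩
  have hprog : m + c + (3 * m + c) = (2 * m + c) + (2 * m + c) := by ring
  exact hm (by linarith [hB (hsub (by simp)) (hsub (by simp)) (hsub (by simp)) hprog])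

theorem ThreeAPFree.iUnion_of_directed {α ι : Type*} [AddMonoid α] {A : ι → Set α}
    (hd : Directed (· ⊆ ·) A) (hA : ∀ i, ThreeAPFree (A i)) : ThreeAPFree (⋃ i, A i) := by
  intro x hx y hy w hw hxyw
  obtain ⟨i, hx⟩ := mem_iUnion.1 hx
  obtain ⟨j, hy⟩ := mem_iUnion.1 hy
  obtain ⟨k, hw⟩ := mem_iUnion.1 hw
  obtain ⟨l, hil, hjl⟩ := hd i j
  obtain ⟨n, hln, hkn⟩ := hd l k
  exact hA n (hln (hil hx)) (hln (hjl hy)) (hkn hw) hxyw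

theorem exists_threeAPFree_of_forall_extend {α ι : Type u} [AddMonoid α] [LinearOrder ι]
    [WellFoundedLT ι] {κ : Cardinal.{u}} (hκ : ℵ₀ < κ) (hι : ∀ i : ι, #(Iio i) < κ)
    {Q : ι → Set α → Prop} (hQ : ∀ i, Monotone (Q i))
    (hext : ∀ i (S : Set α), ThreeAPFree S → #S < κ →
      ∃ C : Set α, C.Countable ∧ Q i C ∧ ThreeAPFree (S ∪ C)) :
    ∃ B : Set α, ThreeAPFree B ∧ ∀ i, Q i B := by
  have : ∀ i (S : Set α), ∃ C : Set α, ThreeAPFree S → #S < κ →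
      C.Countable ∧ Q i C ∧ ThreeAPFree (S ∪ C) := fun i S ↦ by
    by_cases hS : ThreeAPFree S ∧ #S < κ
    · obtain ⟨C, hC⟩ := hext i S hS.1 hS.2
      exact ⟨C, fun _ _ ↦ hC⟩
    · exact ⟨∅, fun h1 h2 ↦ (hS ⟨h1, h2⟩).elim⟩
  choose extend hextend using this
  obtain ⟨F, hF⟩ : ∃ F : ι → Set α, ∀ i, F i = extend i (⋃ j < i, F j) :=
    ⟨wellFounded_lt.fix fun i F ↦ extend i (⋃ (j) (hj : j < i), F j hj),
      fun i ↦ wellFounded_lt.fix_eq _ i⟩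
  have below_eq (i : ι) : ⋃ j < i, F j = ⋃ j : Iio i, accumulate F j := by
    ext x
    simp only [mem_iUnion, mem_accumulate, Subtype.exists, mem_Iio, exists_prop]
    exact ⟨fun ⟨j, hj, hx⟩ ↦ ⟨j, hj, j, le_rfl, hx⟩,
      fun ⟨j, hj, k, hk, hx⟩ ↦ ⟨k, hk.trans_lt hj, hx⟩⟩
  have step (i : ι) : (F i).Countable ∧ Q i (F i) ∧ ThreeAPFree (accumulate F i) := by
    induction i using WellFoundedLT.induction with | _ i IH =>
    have hbelow : ThreeAPFree (⋃ j < i, F j) := by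
      rw [below_eq]
      exact ThreeAPFree.iUnion_of_directed
        (monotone_accumulate.comp (Subtype.mono_coe _)).directed_le fun j ↦ (IH j j.2).2.2
    have hcard : #(⋃ j < i, F j) < κ :=
      (mk_biUnion_le F (Iio i)).trans_lt <| mul_lt_of_lt hκ.le (hι i) <|
        (ciSup_le' fun j : Iio i ↦ (IH j j.2).1.le_aleph0).trans_lt hκ
    obtain ⟨h1, h2, h3⟩ := hextend i _ hbelow hcard
    rw [← hF] at h1 h2 h3
    refine ⟨h1, h2, ?_⟩
    convert h3 using 1
    ext x
    simp [mem_accumulate, le_iff_lt_or_eq, or_and_right, exists_or]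
  refine ⟨⋃ i, F i, ?_, fun i ↦ hQ i (subset_iUnion F i) (step i).2.1⟩
  rw [← iUnion_accumulate]
  exact ThreeAPFree.iUnion_of_directed monotone_accumulate.directed_le fun i ↦ (step i).2.2

/-- In a progression `x + w = y + y` with distinct terms, the term of largest absolute value
would be at most `3/4` of itself. -/
theorem threeAPFree_of_pairwise_abs {A : Set ℝ}
    (hA : A.Pairwise fun a b ↦ 4 * |a| ≤ |b| ∨ 4 * |b| ≤ |a|) : ThreeAPFree A := by
  intro x hx y hy w hw hxyw
  by_contra hxy
  have hwy : w ≠ y := fun h ↦ hxy (by subst h; linarith)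
  have hxw : x ≠ w := fun h ↦ hxy (by subst h; linarith)
  have hpos : 0 < |x - y| := abs_pos.2 (sub_ne_zero.2 hxy)
  have hsum : |x + w| = 2 * |y| := by rw [hxyw, ← two_mul, abs_mul, abs_two]
  have h1 := abs_sub x y
  have h2 := abs_add_le x w
  have h3 : |x| ≤ |x + w| + |w| := by simpa using abs_sub (x + w) w
  have h4 : |w| ≤ |x + w| + |x| := by simpa [add_comm] using abs_sub (x + w) x
  rcases hA hx hy hxy with hsep_xy | hsep_xy <;> rcases hA hw hy hwy with hsep_wy | hsep_wy <;>
    rcases hA hx hw hxw with hsep_xw | hsep_xw <;>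
    linarith [abs_nonneg x, abs_nonneg y, abs_nonneg w]

theorem exists_strictMono_lacunary {z : ℕ → ℝ} (hz : Tendsto z atTop (𝓝 0)) :
    ∃ φ : ℕ → ℕ, StrictMono φ ∧
      ∀ m n, m < n → z (φ m) = 0 ∨ 4 * |z (φ n)| ≤ |z (φ m)| := by
  obtain ⟨φ, -, hφ⟩ := exists_seq_of_forall_finset_exists (fun _ ↦ True)
    (fun m n ↦ m < n ∧ (z m = 0 ∨ 4 * |z n| ≤ |z m|)) fun s _ ↦ by
      have : ∀ m ∈ s, ∀ᶠ n in atTop, m < n ∧ (z m = 0 ∨ 4 * |z n| ≤ |z m|) := by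
        intro m _
        refine (eventually_gt_atTop m).and ?_
        by_cases hm : z m = 0
        · exact .of_forall fun _ ↦ .inl hm
        · have hlim : Tendsto (fun n ↦ |z n|) atTop (𝓝 0) := by simpa using hz.abs
          filter_upwards [hlim.eventually_lt_const (by positivity : (0 : ℝ) < |z m| / 4)]
            with n hn using .inr (by linarith)
      obtain ⟨n, hn⟩ := ((Finset.eventually_all s).2 this).exists
      exact ⟨n, trivial, hn⟩
  exact ⟨φ, strictMono_nat_of_lt_succ fun n ↦ (hφ n (n + 1) n.lt_succ_self).1,
    fun m n h ↦ (hφ m n h).2⟩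

theorem exists_infinite_threeAPFree_insert_zero_image {z : ℕ → ℝ}
    (hz : Tendsto z atTop (𝓝 0)) :
    ∃ M : Set ℕ, M.Infinite ∧ ThreeAPFree (insert 0 (z '' M)) := by
  obtain ⟨φ, hφ, hsep⟩ := exists_strictMono_lacunary hz
  refine ⟨range φ, infinite_range_of_injective hφ.injective, threeAPFree_of_pairwise_abs ?_⟩
  have h0 : ∀ b : ℝ, 4 * |(0 : ℝ)| ≤ |b| := by simp
  rintro _ (rfl | ⟨_, ⟨m, rfl⟩, rfl⟩) _ (rfl | ⟨_, ⟨n, rfl⟩, rfl⟩) hne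
  · exact absurd rfl hne
  · exact .inl (h0 _)
  · exact .inr (h0 _)
  rcases lt_trichotomy m n with h | rfl | h
  · exact (hsep m n h).elim (fun h ↦ .inl (h ▸ h0 _)) .inr
  · exact absurd rfl hne
  · exact (hsep n m h).elim (fun h ↦ .inr (h ▸ h0 _)) .inl

theorem exists_notMem_subfieldClosure_of_mk_lt_continuum {s : Set ℝ} (hs : #s < 𝔠) :
    ∃ a : ℝ, a ∉ Subfield.closure s := by
  by_contra! h
  have : 𝔠 ≤ #(Subfield.closure s) := mk_real ▸
    mk_le_of_injective (f := fun x : ℝ ↦ (⟨x, h x⟩ : Subfield.closure s))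
      fun x y hxy ↦ congrArg Subtype.val hxy
  exact (this.trans (Subfield.cardinalMk_closure_le_max s)).not_gt
    (max_lt hs aleph0_lt_continuum)

/-- A progression meeting both `S` and `a +ᵥ T` would make `a` a rational combination of
points of `S ∪ T`. -/
theorem threeAPFree_union_vadd {S T : Set ℝ} {a : ℝ} (hS : ThreeAPFree S)
    (hT : ThreeAPFree T) (ha : a ∉ Subfield.closure (S ∪ T)) :
    ThreeAPFree (S ∪ (a +ᵥ T)) := by
  have hcomb : ∀ (q : ℚ) {x y w : ℝ}, x ∈ S ∪ T → y ∈ S ∪ T → w ∈ S ∪ T →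
      a ≠ q * (x + w - y - y) := by
    intro q x y w hx hy hw h
    have mem {u} (hu : u ∈ S ∪ T) := Subfield.subset_closure hu
    exact ha (h ▸ mul_mem (SubfieldClass.ratCast_mem _ q)
      (sub_mem (sub_mem (add_mem (mem hx) (mem hw)) (mem hy)) (mem hy)))
  rintro _ (hx | ⟨x, hx, rfl⟩) _ (hy | ⟨y, hy, rfl⟩) _ (hw | ⟨w, hw, rfl⟩) h
  · exact hS hx hy hw h
  all_goals simp only [vadd_eq_add] at h ⊢
  · exact (hcomb (-1) (.inl hx) (.inl hy) (.inr hw) (by push_cast; linarith)).elim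
  · exact (hcomb (1 / 2) (.inl hx) (.inr hy) (.inl hw) (by push_cast; linarith)).elim
  · exact (hcomb 1 (.inl hx) (.inr hy) (.inr hw) (by push_cast; linarith)).elim
  · exact (hcomb (-1) (.inr hx) (.inl hy) (.inl hw) (by push_cast; linarith)).elim
  · exact (hcomb (-1 / 2) (.inr hx) (.inl hy) (.inr hw) (by push_cast; linarith)).elim
  · exact (hcomb 1 (.inr hx) (.inr hy) (.inl hw) (by push_cast; linarith)).elim
  · rw [hT hx hy hw (by linarith)]

def ShiftCompactAt (z : ℕ → ℝ) (A : Set ℝ) : Prop :=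
  ∃ a ∈ A, ∃ M : Set ℕ, M.Infinite ∧ ∀ m ∈ M, a + z m ∈ A

theorem ShiftCompactAt.mono {z : ℕ → ℝ} : Monotone (ShiftCompactAt z) :=
  fun _ _ hAB ⟨a, ha, M, hM, hMA⟩ ↦ ⟨a, hAB ha, M, hM, fun m hm ↦ hAB (hMA m hm)⟩

theorem exists_countable_shiftCompactAt_threeAPFree_union {S : Set ℝ} {z : ℕ → ℝ}
    (hS : ThreeAPFree S) (hcard : #S < 𝔠) (hz : Tendsto z atTop (𝓝 0)) :
    ∃ C : Set ℝ, C.Countable ∧ ShiftCompactAt z C ∧ ThreeAPFree (S ∪ C) := by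
  obtain ⟨M, hM, hT⟩ := exists_infinite_threeAPFree_insert_zero_image hz
  set T := insert 0 (z '' M)
  have hTc : T.Countable := (M.to_countable.image z).insert 0
  have hST : #(S ∪ T : Set ℝ) < 𝔠 := (mk_union_le S T).trans_lt <|
    add_lt_of_lt aleph0_le_continuum hcard (hTc.le_aleph0.trans_lt aleph0_lt_continuum)
  obtain ⟨a, ha⟩ := exists_notMem_subfieldClosure_of_mk_lt_continuum hST
  refine ⟨a +ᵥ T, hTc.image _, ?_, threeAPFree_union_vadd hS hT ha⟩
  exact ⟨a, ⟨0, mem_insert _ _, add_zero a⟩, M, hM,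
    fun m hm ↦ ⟨z m, mem_insert_of_mem _ (mem_image_of_mem z hm), rfl⟩⟩

theorem exists_surjective_toType_ord_continuum_nullSeq :
    ∃ z : (ord (𝔠 : Cardinal.{0})).ToType → {z : ℕ → ℝ // Tendsto z atTop (𝓝 0)},
      Function.Surjective z := by
  have : Nonempty {z : ℕ → ℝ // Tendsto z atTop (𝓝 0)} := ⟨⟨0, tendsto_const_nhds⟩⟩
  obtain ⟨e⟩ : Nonempty
      ({z : ℕ → ℝ // Tendsto z atTop (𝓝 0)} ↪ (ord (𝔠 : Cardinal.{0})).ToType) := by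
    rw [← Cardinal.le_def, mk_ord_toType]
    refine (mk_subtype_le _).trans_eq ?_
    rw [mk_arrow, mk_real, mk_nat, lift_id, lift_id, continuum_power_aleph0]
  exact ⟨_, Function.invFun_surjective e.injective⟩

/-- **Theorem 3(ii), Part 2.** There is a shift-compact set `B ⊆ ℝ` containing no
subset similar to `{1,2,3}` (so `B ∉ Emb`). -/
theorem SC_not_subset_Emb :
    ∃ B : Set ℝ, ShiftCompact B ∧
      ¬ ∃ m c : ℝ, m ≠ 0 ∧ ({m + c, 2 * m + c, 3 * m + c} : Set ℝ) ⊆ B := by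
  obtain ⟨z, hz⟩ := exists_surjective_toType_ord_continuum_nullSeq
  obtain ⟨B, hB, hBz⟩ := exists_threeAPFree_of_forall_extend aleph0_lt_continuum
    (fun i ↦ by simpa using mk_Iio_lt i (by simp)) (fun _ ↦ ShiftCompactAt.mono)
    fun i S hS hcard ↦ exists_countable_shiftCompactAt_threeAPFree_union hS hcard (z i).2
  refine ⟨B, fun w hw ↦ ?_, hB.not_similar_one_two_three⟩
  obtain ⟨i, hi⟩ := hz ⟨w, hw⟩
  have hwB := hBz i
  rwa [hi] at hwB
end

section
/- There exists a set A ⊆ [0,1] with Lebesgue outer measure λ*(A) = 1 which contains no subset similar to {1,2,3}, i.e. there are no m ≠ 0 and c ∈ ℝ with {m + c, 2m + c, 3m + c} ⊆ A. -/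
open MeasureTheory

namespace NoSimilarAux

open Set Cardinal Ordinal

/-- The family of compact positive-measure subsets of `[0,1]`. -/
def Kfam : Set (Set ℝ) := {K | IsCompact K ∧ K ⊆ Set.Icc 0 1 ∧ 0 < volume K}

lemma Icc_mem_Kfam : Set.Icc (0:ℝ) 1 ∈ Kfam := by
  refine ⟨isCompact_Icc, subset_rfl, ?_⟩
  rw [Real.volume_Icc]
  norm_num

lemma mk_measurable_le : #{t : Set ℝ | MeasurableSet t} ≤ 𝔠 := by
  have h := MeasurableSpace.cardinal_measurableSet_le_continuum
    (α := ℝ) (s := Set.range (Set.Iio : ℝ → Set ℝ))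
    (mk_range_le.trans (by rw [Cardinal.mk_real]))
  have he : (Real.measurableSpace)
      = MeasurableSpace.generateFrom (Set.range (Set.Iio : ℝ → Set ℝ)) := by
    rw [BorelSpace.measurable_eq (α := ℝ), borel_eq_generateFrom_Iio]
  rw [show (Real.measurableSpace) = _ from he]
  exact h

lemma mk_Kfam_le : #Kfam ≤ 𝔠 :=
  (Cardinal.mk_le_mk_of_subset fun K hK => hK.1.isClosed.measurableSet).trans
    mk_measurable_le

lemma mk_compact (K : Set ℝ) (hK : K ∈ Kfam) : 𝔠 ≤ #K := by
  have hnc : ¬ K.Countable := fun hc => by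
    simpa [hc.measure_zero volume] using hK.2.2
  obtain ⟨F, hFr, _, hFi⟩ :=
    hK.1.isClosed.exists_nat_bool_injection_of_not_countable hnc
  have : #(ℕ → Bool) ≤ #K := by
    refine Cardinal.mk_le_of_injective (f := fun x => (⟨F x, hFr ⟨x, rfl⟩⟩ : K)) ?_
    intro a b hab
    exact hFi (by simpa using hab)
  refine le_trans (le_of_eq ?_) this
  rw [Cardinal.mk_arrow]
  simp [Cardinal.mk_bool, ← Cardinal.two_power_aleph0]

/-- points forbidden once `S` is chosen: anything forming a 3-AP with two points of `S`. -/
def bad (S : Set ℝ) : Set ℝ :=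
  Set.image2 (fun a b => 2*a - b) S S ∪ Set.image2 (fun a b => (a+b)/2) S S

lemma mk_bad_lt {S : Set ℝ} (h : #S < 𝔠) : #(bad S) < 𝔠 := by
  have h1 : #S * #S < 𝔠 :=
    Cardinal.mul_lt_of_lt Cardinal.aleph0_lt_continuum.le h h
  have h2 : #(Set.image2 (fun a b : ℝ => 2*a - b) S S) < 𝔠 :=
    lt_of_le_of_lt Cardinal.mk_image2_le h1
  have h3 : #(Set.image2 (fun a b : ℝ => (a+b)/2) S S) < 𝔠 :=
    lt_of_le_of_lt Cardinal.mk_image2_le h1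
  exact lt_of_le_of_lt (Cardinal.mk_union_le _ _)
    (Cardinal.add_lt_of_lt Cardinal.aleph0_lt_continuum.le h2 h3)

lemma exists_good (K : Set ℝ) (hK : K ∈ Kfam) (S : Set ℝ) (hS : #S < 𝔠) :
    ∃ x, x ∈ K ∧ x ∉ bad S := by
  by_contra h
  push_neg at h
  have hsub : K ⊆ bad S := fun x hx => h x hx
  exact absurd ((mk_compact K hK).trans (Cardinal.mk_le_mk_of_subset hsub))
    (not_le.2 (mk_bad_lt hS))

/-- index type: the initial ordinal of the continuum. -/
abbrev I : Type := (Cardinal.continuum).ord.ToType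

lemma mk_I : #I = 𝔠 := by rw [Cardinal.mk_toType, Cardinal.card_ord]

section

variable (g : I → Kfam)

lemma step (i : I) (prev : ∀ j : I, j < i → ℝ) :
    ∃ x, x ∈ (g i).1 ∧ x ∉ bad (Set.range fun j : Set.Iio i => prev j j.2) := by
  refine exists_good _ (g i).2 _ ?_
  exact lt_of_le_of_lt Cardinal.mk_range_le (Cardinal.mk_Iio_ord_toType i)

noncomputable def f : I → ℝ :=
  WellFounded.fix (wellFounded_lt) fun i IH => Classical.choose (step g i IH)

lemma f_spec (i : I) :
    f g i ∈ (g i).1 ∧ f g i ∉ bad (Set.range fun j : Set.Iio i => f g j) := by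
  have h : f g i = Classical.choose (step g i fun j _ => f g j) :=
    WellFounded.fix_eq _ _ _
  rw [h]
  exact Classical.choose_spec (step g i fun j _ => f g j)

lemma f_not_two_sub {u v w : I} (hu : u < w) (hv : v < w) :
    f g w ≠ 2 * f g u - f g v := by
  intro h
  exact (f_spec g w).2 (Or.inl ⟨f g u, ⟨⟨u, hu⟩, rfl⟩, f g v, ⟨⟨v, hv⟩, rfl⟩, h.symm⟩)

lemma f_not_mid {u v w : I} (hu : u < w) (hv : v < w) :
    f g w ≠ (f g u + f g v) / 2 := by
  intro h
  exact (f_spec g w).2 (Or.inr ⟨f g u, ⟨⟨u, hu⟩, rfl⟩, f g v, ⟨⟨v, hv⟩, rfl⟩, h.symm⟩)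

end

end NoSimilarAux

open NoSimilarAux Set Cardinal in
/-- **Theorem 3(iii).** There exists `A ⊆ [0,1]` with Lebesgue outer measure `1`
containing no subset similar to `{1,2,3}`. (Note: a `Measure` applied to an arbitrary
set computes its outer measure, so `volume A = 1` expresses `λ*(A) = 1`.) -/
theorem full_outer_measure_no_similar_copy :
    ∃ A : Set ℝ, A ⊆ Set.Icc 0 1 ∧ volume A = 1 ∧
      ¬ ∃ m c : ℝ, m ≠ 0 ∧ ({m + c, 2 * m + c, 3 * m + c} : Set ℝ) ⊆ A := by
  -- get a surjection `g : I → Kfam`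
  have hne : Nonempty Kfam := ⟨⟨_, Icc_mem_Kfam⟩⟩
  have hle : #Kfam ≤ #I := by rw [mk_I]; exact mk_Kfam_le
  obtain ⟨e⟩ := Cardinal.le_def _ _ |>.1 hle
  have hg : Function.Surjective (Function.invFun e) :=
    Function.invFun_surjective e.injective
  set g : I → Kfam := Function.invFun e with hgdef
  refine ⟨Set.range (f g), ?_, ?_, ?_⟩
  · rintro x ⟨i, rfl⟩
    exact (g i).2.2.1 (f_spec g i).1
  · -- full outer measure
    have hsub : Set.range (f g) ⊆ Set.Icc 0 1 := by
      rintro x ⟨i, rfl⟩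
      exact (g i).2.2.1 (f_spec g i).1
    have hle1 : volume (Set.range (f g)) ≤ 1 := by
      calc volume (Set.range (f g)) ≤ volume (Set.Icc (0:ℝ) 1) := measure_mono hsub
        _ = 1 := by rw [Real.volume_Icc]; norm_num
    rcases eq_or_lt_of_le hle1 with h | h
    · exact h
    exfalso
    obtain ⟨B, hAB, hBm, hBv⟩ := exists_measurable_superset volume (Set.range (f g))
    set B' : Set ℝ := B ∩ Set.Icc 0 1 with hB'
    have hB'm : MeasurableSet B' := hBm.inter measurableSet_Icc
    have hB'v : volume B' < 1 := lt_of_le_of_lt (le_trans (measure_mono inter_subset_left) hBv.le) h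
    set C : Set ℝ := Set.Icc 0 1 \ B' with hC
    have hCm : MeasurableSet C := measurableSet_Icc.diff hB'm
    have hCv : 0 < volume C := by
      have hdiff : volume C = volume (Set.Icc (0:ℝ) 1) - volume B' :=
        measure_diff inter_subset_right hB'm.nullMeasurableSet
          (lt_of_lt_of_le hB'v le_top).ne
      rw [hdiff, Real.volume_Icc]
      have : volume B' < ENNReal.ofReal (1 - 0) := by
        rw [show ENNReal.ofReal (1 - 0) = 1 by norm_num]; exact hB'v
      exact tsub_pos_of_lt this
    have hCfin : volume C ≠ ⊤ := by
      refine (lt_of_le_of_lt (measure_mono diff_subset) ?_).ne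
      rw [Real.volume_Icc]; exact ENNReal.ofReal_lt_top
    obtain ⟨K, hKC, hKc, hKv⟩ := hCm.exists_isCompact_lt_add (μ := volume) hCfin hCv.ne'
    have hKpos : 0 < volume K := by
      by_contra hz
      push_neg at hz
      have : volume K = 0 := le_antisymm hz zero_le
      rw [this, zero_add] at hKv
      exact lt_irrefl _ hKv
    have hKmem : K ∈ Kfam := ⟨hKc, hKC.trans diff_subset, hKpos⟩
    obtain ⟨i, hi⟩ := hg ⟨K, hKmem⟩
    have hfi : f g i ∈ K := by
      have := (f_spec g i).1
      rw [hi] at this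
      exact this
    have hfiB' : f g i ∈ B' :=
      ⟨hAB ⟨i, rfl⟩, (g i).2.2.1 (f_spec g i).1⟩
    exact (hKC hfi).2 hfiB'
  · -- no similar copy of {1,2,3}
    rintro ⟨m, c, hm, hsub⟩
    obtain ⟨i, hi⟩ := hsub (Set.mem_insert _ _)
    obtain ⟨j, hj⟩ := hsub (Set.mem_insert_of_mem _ (Set.mem_insert _ _))
    obtain ⟨k, hk⟩ := hsub (Set.mem_insert_of_mem _ (Set.mem_insert_of_mem _ rfl))
    -- f g i = m + c, f g j = 2m + c, f g k = 3m + c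
    have hij : i ≠ j := fun h => by rw [h, hj] at hi; apply hm; linarith
    have hjk : j ≠ k := fun h => by rw [h, hk] at hj; apply hm; linarith
    have hik : i ≠ k := fun h => by rw [h, hk] at hi; apply hm; linarith
    rcases lt_trichotomy i j with h1 | h1 | h1
    · rcases lt_trichotomy j k with h2 | h2 | h2
      · -- k is max : f k = 2 f j - f i
        exact f_not_two_sub g h2 (h1.trans h2) (by rw [hi, hj, hk]; ring)
      · exact absurd h2 hjk
      · rcases lt_trichotomy i k with h3 | h3 | h3
        · -- j is max
          exact f_not_mid g h1 h2 (by rw [hi, hj, hk]; ring)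
        · exact absurd h3 hik
        · -- j is max still (k < i < j)
          exact f_not_mid g h1 h2 (by rw [hi, hj, hk]; ring)
    · exact absurd h1 hij
    · rcases lt_trichotomy i k with h2 | h2 | h2
      · -- k max: f k = 2 f j - f i
        exact f_not_two_sub g (h1.trans h2) h2 (by rw [hi, hj, hk]; ring)
      · exact absurd h2 hik
      · -- i max: f i = 2 f j - f k
        exact f_not_two_sub g h1 h2 (by rw [hi, hj, hk]; ring)
end

section
/- There exists a set A ⊆ [0,1] such that A ∩ I is of second category (non-meagre) for every non-degenerate closed interval I ⊆ [0,1], and A contains no subset similar to {1,2,3}, i.e. there are no m ≠ 0 and c ∈ ℝ with {m + c, 2m + c, 3m + c} ⊆ A. -/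
open Set Cardinal

noncomputable section

namespace APFreeConstr

/-! ### Encoding open/meagre sets by countable data -/

def openOf (g : ℕ → ℚ × ℚ) : Set ℝ := ⋃ k, Ioo ((g k).1 : ℝ) ((g k).2 : ℝ)

lemma exists_openOf {U : Set ℝ} (hU : IsOpen U) : ∃ g, openOf g = U := by
  classical
  refine ⟨fun k => if Ioo (((Denumerable.eqv (ℚ × ℚ)).symm k).1 : ℝ)
      (((Denumerable.eqv (ℚ × ℚ)).symm k).2 : ℝ) ⊆ U
      then (Denumerable.eqv (ℚ × ℚ)).symm k else (0, 0), ?_⟩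
  apply subset_antisymm
  · refine iUnion_subset fun k => ?_
    by_cases h : Ioo (((Denumerable.eqv (ℚ × ℚ)).symm k).1 : ℝ)
        (((Denumerable.eqv (ℚ × ℚ)).symm k).2 : ℝ) ⊆ U <;> simp [openOf, h]
  · intro x hx
    obtain ⟨v, hv, hxv, hvU⟩ :=
      Real.isTopologicalBasis_Ioo_rat.exists_subset_of_mem_open hx hU
    simp only [mem_iUnion, mem_singleton_iff] at hv
    obtain ⟨p, q, hpq, rfl⟩ := hv
    obtain ⟨k, hk⟩ := (Denumerable.eqv (ℚ × ℚ)).symm.surjective (p, q)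
    refine mem_iUnion.2 ⟨k, ?_⟩
    simp only [hk, hvU, if_true]
    exact hxv

open Classical in
def pieceOf (g : ℕ → ℚ × ℚ) : Set ℝ :=
  if IsNowhereDense (openOf g)ᶜ then (openOf g)ᶜ else ∅

lemma nwd_isMeagre {s : Set ℝ} (h : IsNowhereDense s) : IsMeagre s :=
  isMeagre_iff_countable_union_isNowhereDense.2
    ⟨{s}, by simpa using h, countable_singleton _, by simp⟩

lemma isMeagre_pieceOf (g : ℕ → ℚ × ℚ) : IsMeagre (pieceOf g) := by
  classical
  unfold pieceOf; split
  · exact nwd_isMeagre ‹_›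
  · exact IsMeagre.empty

def meagreOf (G : ℕ → ℕ → ℚ × ℚ) : Set ℝ := ⋃ n, pieceOf (G n)

lemma isMeagre_meagreOf (G : ℕ → ℕ → ℚ × ℚ) : IsMeagre (meagreOf G) :=
  isMeagre_iUnion fun _ => isMeagre_pieceOf _

lemma exists_meagreOf {s : Set ℝ} (hs : IsMeagre s) : ∃ G, s ⊆ meagreOf G := by
  obtain ⟨S, hnwd, hc, hsub⟩ := isMeagre_iff_countable_union_isNowhereDense.1 hs
  rcases S.eq_empty_or_nonempty with rfl | hne
  · exact ⟨fun _ _ => (0, 0), fun x hx => absurd (hsub hx) (by simp)⟩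
  · obtain ⟨f, hf⟩ := hc.exists_eq_range hne
    choose g hg using fun n =>
      exists_openOf (isClosed_closure (s := f n)).isOpen_compl
    refine ⟨g, hsub.trans ?_⟩
    intro x hx
    obtain ⟨t, htS, hxt⟩ := hx
    rw [hf] at htS
    obtain ⟨n, rfl⟩ := htS
    refine mem_iUnion.2 ⟨n, ?_⟩
    have hclo : (openOf (g n))ᶜ = closure (f n) := by rw [hg n, compl_compl]
    have hnwd' : IsNowhereDense (openOf (g n))ᶜ := by
      rw [hclo]
      exact (hnwd _ (hf ▸ mem_range_self n)).closure
    classical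
    rw [pieceOf, if_pos hnwd', hclo]
    exact subset_closure hxt

/-! ### Meagre set facts -/

lemma not_isMeagre_open {U : Set ℝ} (hU : IsOpen U) (hne : U.Nonempty) :
    ¬ IsMeagre U := by
  intro h
  obtain ⟨x, hxU, hxc⟩ := (dense_of_mem_residual h).inter_open_nonempty U hU hne
  exact hxc hxU

lemma isMeagre_preimage (φ : ℝ ≃ₜ ℝ) {s : Set ℝ} (hs : IsMeagre s) :
    IsMeagre (φ ⁻¹' s) := by
  obtain ⟨S, hnwd, hc, hsub⟩ := isMeagre_iff_countable_union_isNowhereDense.1 hs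
  refine isMeagre_iff_countable_union_isNowhereDense.2
    ⟨(fun u => φ ⁻¹' u) '' S, ?_, hc.image _, ?_⟩
  · rintro t ⟨u, hu, rfl⟩
    have h := hnwd u hu
    rw [IsNowhereDense] at h ⊢
    rw [← φ.preimage_closure, ← φ.preimage_interior, h, preimage_empty]
  · intro x hx
    obtain ⟨u, hu, hxu⟩ := hsub hx
    exact ⟨φ ⁻¹' u, ⟨u, hu, rfl⟩, hxu⟩

lemma continuum_le_diff {a b : ℝ} (hab : a < b) {M : Set ℝ} (hM : IsMeagre M) :
    𝔠 ≤ #(Icc a b \ M : Set ℝ) := by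
  set D := Icc a b \ M with hD
  have hV : ∀ v ∈ Ioo ((3*a+b)/2) ((a+3*b)/2),
      ∃ p ∈ D, ∃ q ∈ D, p + q = v := by
    rintro v ⟨hv1, hv2⟩
    have hJne : max a (v - b) < min b (v - a) := by
      apply max_lt <;> apply lt_min <;> linarith
    have hφ : IsMeagre ((fun x : ℝ => v - x) ⁻¹' M) := by
      have h1 := isMeagre_preimage ((Homeomorph.neg ℝ).trans (Homeomorph.addLeft v)) hM
      have h2 : (fun x : ℝ => v - x) ⁻¹' M =
          ((Homeomorph.neg ℝ).trans (Homeomorph.addLeft v)) ⁻¹' M := by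
        ext x; simp [sub_eq_add_neg]
      rwa [h2]
    have hmeag : IsMeagre (M ∪ (fun x : ℝ => v - x) ⁻¹' M) := by
      rw [IsMeagre, compl_union]
      exact Filter.inter_mem hM hφ
    have hnotsub : ¬ (Ioo (max a (v-b)) (min b (v-a)) ⊆
        M ∪ (fun x : ℝ => v - x) ⁻¹' M) := fun h =>
      not_isMeagre_open isOpen_Ioo (nonempty_Ioo.2 hJne) (hmeag.mono h)
    obtain ⟨x, hxJ, hxM⟩ := not_subset.1 hnotsub
    simp only [mem_union, mem_preimage, not_or] at hxM
    obtain ⟨hxJ1, hxJ2⟩ := hxJ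
    rw [max_lt_iff] at hxJ1
    rw [lt_min_iff] at hxJ2
    refine ⟨x, ⟨⟨hxJ1.1.le, hxJ2.1.le⟩, hxM.1⟩,
      v - x, ⟨⟨by linarith [hxJ2.2], by linarith [hxJ1.2]⟩, hxM.2⟩, by ring⟩
  choose p hp q hq hpq using hV
  by_contra hlt
  rw [not_le] at hlt
  have hinj : Function.Injective
      (fun v : Ioo ((3*a+b)/2) ((a+3*b)/2) =>
        ((⟨p v v.2, hp v v.2⟩ : D), (⟨q v v.2, hq v v.2⟩ : D))) := by
    intro v w h
    have h1 : p v v.2 = p w w.2 := congrArg (fun z => (z.1 : ℝ)) h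
    have h2 : q v v.2 = q w w.2 := congrArg (fun z => (z.2 : ℝ)) h
    have : (v : ℝ) = w := by
      rw [← hpq v v.2, ← hpq w w.2, h1, h2]
    exact Subtype.ext this
  have hle : 𝔠 ≤ #(↥D × ↥D) := by
    rw [← mk_Ioo_real (show (3*a+b)/2 < (a+3*b)/2 by linarith)]
    exact mk_le_of_injective hinj
  have : #(↥D × ↥D) < 𝔠 := by
    rw [mk_prod, lift_id]
    exact mul_lt_of_lt aleph0_le_continuum hlt hlt
  exact absurd (hle.trans_lt this) (lt_irrefl _)

/-! ### The forbidden set -/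

def Bad (P : Set ℝ) : Set ℝ :=
  (fun pq : ℝ × ℝ => 2 * pq.2 - pq.1) '' (P ×ˢ P) ∪
  (fun pq : ℝ × ℝ => (pq.1 + pq.2) / 2) '' (P ×ˢ P)

lemma mk_bad_lt {P : Set ℝ} (h : #P < 𝔠) : #(Bad P) < 𝔠 := by
  have hP2 : #(↥(P ×ˢ P) : Type) < 𝔠 := by
    rw [mk_congr (Equiv.Set.prod P P), mk_prod, lift_id]
    exact mul_lt_of_lt aleph0_le_continuum h h
  exact lt_of_le_of_lt (mk_union_le _ _)
    (add_lt_of_lt aleph0_le_continuum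
      (lt_of_le_of_lt (mk_image_le) hP2) (lt_of_le_of_lt (mk_image_le) hP2))

/-! ### The index type and enumeration -/

abbrev Idx : Type := ℚ × ℚ × (ℕ → ℕ → ℚ × ℚ)

abbrev OT : Type := (Cardinal.continuum).ord.ToType

lemma mk_Idx_le : #Idx ≤ 𝔠 := by
  have h1 : #(ℕ → ℕ → ℚ × ℚ) = 𝔠 := by
    rw [← power_def, ← power_def, mk_nat, mk_prod, mk_denumerable, lift_aleph0,
      aleph0_mul_aleph0, aleph0_power_aleph0, continuum_power_aleph0]
  have h2 : #Idx = 𝔠 := by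
    rw [mk_prod, mk_prod, h1, mk_denumerable, lift_aleph0, lift_continuum,
      aleph0_mul_continuum, lift_continuum, aleph0_mul_continuum]
  exact h2.le

lemma exists_sigma : ∃ σ : OT → Idx, Function.Surjective σ := by
  have hle : #Idx ≤ #OT := by rw [mk_ord_toType]; exact mk_Idx_le
  obtain ⟨emb⟩ := le_def _ _ |>.1 hle
  have : Nonempty Idx := ⟨(0, 0, fun _ _ => (0, 0))⟩
  exact ⟨Function.invFun emb, Function.invFun_surjective emb.injective⟩

/-! ### Target sets -/

def targetOf (t : Idx) : Set ℝ :=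
  (if 0 ≤ t.1 ∧ t.1 < t.2.1 ∧ t.2.1 ≤ 1 then Icc (t.1 : ℝ) (t.2.1 : ℝ)
   else Icc 0 1) \ meagreOf t.2.2

lemma targetOf_subset (t : Idx) : targetOf t ⊆ Icc 0 1 := by
  rw [targetOf]
  split
  · rename_i h
    refine (diff_subset).trans (Icc_subset_Icc ?_ ?_)
    · exact_mod_cast h.1
    · exact_mod_cast h.2.2
  · exact diff_subset

lemma mk_targetOf (t : Idx) : 𝔠 ≤ #(targetOf t) := by
  rw [targetOf]
  split
  · rename_i h
    exact continuum_le_diff (by exact_mod_cast h.2.1) (isMeagre_meagreOf _)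
  · exact continuum_le_diff one_pos (isMeagre_meagreOf _)

/-! ### The transfinite recursion -/

def step (σ : OT → Idx) (i : OT) (rec : ∀ j, j < i → ℝ) : Set ℝ :=
  targetOf (σ i) \ Bad (range fun j : Iio i => rec j j.2)

lemma step_nonempty (σ : OT → Idx) (i : OT) (rec : ∀ j, j < i → ℝ) :
    (step σ i rec).Nonempty := by
  have h1 : #(range fun j : Iio i => rec j j.2) < 𝔠 :=
    lt_of_le_of_lt mk_range_le (Cardinal.mk_Iio_ord_toType i)
  have h2 := mk_bad_lt h1
  by_contra h
  rw [not_nonempty_iff_eq_empty, step, diff_eq_empty] at h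
  exact absurd ((mk_targetOf _).trans (mk_le_mk_of_subset h)) (not_le.2 h2)

def F (σ : OT → Idx) : OT → ℝ :=
  (wellFounded_lt (α := OT)).fix fun i rec => (step_nonempty σ i rec).some

lemma F_spec (σ : OT → Idx) (i : OT) :
    F σ i ∈ step σ i fun j _ => F σ j := by
  have h : F σ i = (step_nonempty σ i fun j _ => F σ j).some :=
    WellFounded.fix_eq (wellFounded_lt (α := OT))
      (fun i rec => (step_nonempty σ i rec).some) i
  rw [h]
  exact (step_nonempty σ i _).some_mem

end APFreeConstr

end

open APFreeConstr Set in
/-- **Theorem 3(iv).** There exists `A ⊆ [0,1]` such that `A ∩ I` is of second category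
(non-meagre in ℝ) for every non-degenerate closed interval `I ⊆ [0,1]`, and `A` contains
no subset similar to `{1,2,3}`. -/
theorem second_category_no_similar_copy :
    ∃ A : Set ℝ, A ⊆ Set.Icc 0 1 ∧
      (∀ a b : ℝ, 0 ≤ a → a < b → b ≤ 1 → ¬ IsMeagre (A ∩ Set.Icc a b)) ∧
      ¬ ∃ m c : ℝ, m ≠ 0 ∧ ({m + c, 2 * m + c, 3 * m + c} : Set ℝ) ⊆ A := by
  obtain ⟨σ, hσ⟩ := exists_sigma
  refine ⟨Set.range (F σ), ?_, ?_, ?_⟩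
  · rintro x ⟨i, rfl⟩
    exact targetOf_subset _ (F_spec σ i).1
  · intro a b ha hab hb1 hmeag
    obtain ⟨G, hG⟩ := exists_meagreOf hmeag
    obtain ⟨q1, hq1a, hq1b⟩ := exists_rat_btwn hab
    obtain ⟨q2, hq21, hq2b⟩ := exists_rat_btwn hq1b
    obtain ⟨i, hi⟩ := hσ (q1, q2, G)
    have hcond : 0 ≤ q1 ∧ q1 < q2 ∧ q2 ≤ 1 := by
      refine ⟨?_, ?_, ?_⟩
      · have : (0:ℝ) ≤ q1 := ha.trans hq1a.le
        exact_mod_cast this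
      · exact_mod_cast hq21
      · have : (q2:ℝ) ≤ 1 := hq2b.le.trans hb1
        exact_mod_cast this
    have hF := (F_spec σ i).1
    rw [hi] at hF
    rw [targetOf, if_pos hcond] at hF
    have hmemI : F σ i ∈ Set.Icc a b :=
      ⟨hq1a.le.trans hF.1.1, hF.1.2.trans hq2b.le⟩
    have : F σ i ∈ meagreOf G := hG ⟨⟨i, rfl⟩, hmemI⟩
    exact hF.2 this
  · rintro ⟨m, c, hm, hsub⟩
    obtain ⟨i1, hi1⟩ := hsub (show m + c ∈ _ by simp)
    obtain ⟨i2, hi2⟩ := hsub (show 2 * m + c ∈ _ by simp)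
    obtain ⟨i3, hi3⟩ := hsub (show 3 * m + c ∈ _ by simp)
    have notbad : ∀ i j k : OT, j < i → k < i →
        F σ i ≠ 2 * F σ k - F σ j ∧ F σ i ≠ (F σ j + F σ k) / 2 := by
      intro i j k hj hk
      have hspec := (F_spec σ i).2
      constructor <;> intro heq <;> apply hspec
      · exact Or.inl ⟨(F σ j, F σ k),
          ⟨⟨⟨j, hj⟩, rfl⟩, ⟨⟨k, hk⟩, rfl⟩⟩, heq.symm⟩
      · exact Or.inr ⟨(F σ j, F σ k),
          ⟨⟨⟨j, hj⟩, rfl⟩, ⟨⟨k, hk⟩, rfl⟩⟩, heq.symm⟩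
    have h12 : i1 ≠ i2 := fun h => by
      rw [h, hi2] at hi1; exact hm (by linarith)
    have h13 : i1 ≠ i3 := fun h => by
      rw [h, hi3] at hi1; exact hm (by linarith)
    have h23 : i2 ≠ i3 := fun h => by
      rw [h, hi3] at hi2; exact hm (by linarith)
    rcases lt_trichotomy i1 i2 with h | h | h
    · rcases lt_trichotomy i2 i3 with h' | h' | h'
      · exact (notbad i3 i1 i2 (h.trans h') h').1 (by rw [hi1, hi2, hi3]; ring)
      · exact h23 h'
      · exact (notbad i2 i1 i3 h h').2 (by rw [hi1, hi2, hi3]; ring)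
    · exact h12 h
    · rcases lt_trichotomy i1 i3 with h' | h' | h'
      · exact (notbad i3 i1 i2 h' (h.trans h')).1 (by rw [hi1, hi2, hi3]; ring)
      · exact h13 h'
      · exact (notbad i1 i3 i2 h' h).1 (by rw [hi1, hi2, hi3]; ring)
end

section
/- There exist a set A ⊆ [0,1] with Lebesgue outer measure λ*(A) = 1 and an additive function f : ℝ → ℝ such that f is bounded above on A and f is not continuous. (Hence A is not in the class BC.) -/
open MeasureTheory ENNReal Pointwise

private lemma exists_refl_inter_pos (S : Set ℝ) (hS : MeasurableSet S) (h0 : volume S ≠ 0) :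
    ∃ c : ℝ, volume (S ∩ (fun x => c - x) ⁻¹' S) ≠ 0 := by
  by_contra hc
  push_neg at hc
  have hindm : Measurable (S.indicator (1 : ℝ → ℝ≥0∞)) := measurable_const.indicator hS
  have hmeas : Measurable fun p : ℝ × ℝ =>
      S.indicator (1 : ℝ → ℝ≥0∞) p.2 * S.indicator 1 (p.1 - p.2) :=
    (hindm.comp measurable_snd).mul (hindm.comp (measurable_fst.sub measurable_snd))
  have key : ∀ T : Set ℝ, MeasurableSet T → (∫⁻ a : ℝ, T.indicator (1 : ℝ → ℝ≥0∞) a) = volume T := by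
    intro T hT; rw [lintegral_indicator hT]; simp
  have hpre : ∀ c : ℝ, MeasurableSet ((fun x : ℝ => c - x) ⁻¹' S) :=
    fun c => hS.preimage (measurable_const.sub measurable_id)
  have h1 : ∀ c : ℝ, volume (S ∩ (fun x : ℝ => c - x) ⁻¹' S)
      = ∫⁻ x, S.indicator 1 x * S.indicator 1 (c - x) := by
    intro c
    rw [← key _ (hS.inter (hpre c))]
    refine lintegral_congr fun x => ?_
    by_cases hx : x ∈ S <;> by_cases hx' : (c - x) ∈ S <;>
      simp [Set.indicator_apply, hx, hx', Set.mem_preimage]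
  have h2 : (∫⁻ c : ℝ, ∫⁻ x : ℝ, S.indicator 1 x * S.indicator 1 (c - x)) = 0 := by
    have : ∀ c : ℝ, (∫⁻ x : ℝ, S.indicator 1 x * S.indicator 1 (c - x)) = 0 := by
      intro c; rw [← h1 c]; exact hc c
    simp [this]
  rw [lintegral_lintegral_swap hmeas.aemeasurable] at h2
  have h3 : ∀ x : ℝ, (∫⁻ c : ℝ, S.indicator (1 : ℝ → ℝ≥0∞) x * S.indicator 1 (c - x))
      = S.indicator 1 x * volume S := by
    intro x
    rw [lintegral_const_mul' _ _ (by by_cases hx : x ∈ S <;> simp [Set.indicator_apply, hx]),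
      lintegral_sub_right_eq_self (S.indicator 1) x, key S hS]
  simp only [h3] at h2
  rw [lintegral_mul_const _ hindm, key S hS] at h2
  exact h0 (by rcases mul_eq_zero.1 h2 with h | h <;> exact h)

/-- **Theorem 3(v).** There exist `A ⊆ [0,1]` of full Lebesgue outer measure and an
additive `f : ℝ → ℝ` bounded above on `A` but not continuous (so `A ∉ BC`).
(A `Measure` applied to an arbitrary set computes its outer measure.) -/
theorem full_outer_measure_not_BC :
    ∃ (A : Set ℝ) (f : ℝ → ℝ), A ⊆ Set.Icc 0 1 ∧ volume A = 1 ∧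
      (∀ x y : ℝ, f (x + y) = f x + f y) ∧
      (∃ B : ℝ, ∀ a ∈ A, f a ≤ B) ∧
      ¬ Continuous f := by
  classical
  -- the Hamel-basis coordinate functional
  set b := Module.Basis.ofVectorSpace ℚ ℝ with hb
  obtain ⟨i⟩ := b.index_nonempty
  set F : ℝ →ₗ[ℚ] ℚ := b.coord i with hF
  set f : ℝ → ℝ := fun x => ((F x : ℚ) : ℝ) with hfdef
  have hadd : ∀ x y : ℝ, f (x + y) = f x + f y := by
    intro x y; simp [hfdef, map_add]
  have hsmul : ∀ (q : ℚ) (x : ℝ), f ((q : ℝ) * x) = (q : ℝ) * f x := by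
    intro q x
    have h1 : (q : ℝ) * x = q • x := (Rat.smul_def q x).symm
    rw [h1]; simp [hfdef, LinearMap.map_smul]
  have hbi : f (b i) = 1 := by
    simp [hfdef, hF, Module.Basis.coord_apply, Module.Basis.repr_self]
  -- f is not ℝ-linear
  have hne : ¬ ∀ x : ℝ, f x = f 1 * x := by
    intro hall
    have hs1 : f 1 * b i = 1 := by rw [← hall (b i), hbi]
    have hs0 : f 1 ≠ 0 := by intro h; rw [h, zero_mul] at hs1; exact zero_ne_one hs1
    have hy : ∃ y : ℝ, y ∉ Set.range (fun q : ℚ => (q : ℝ) * b i) := by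
      by_contra hsub
      push_neg at hsub
      exact Cardinal.not_countable_real
        ((Set.countable_range (fun q : ℚ => (q : ℝ) * b i)).mono
          (fun y _ => hsub y))
    obtain ⟨y, hy⟩ := hy
    set z : ℝ := y - ((F y : ℚ) : ℝ) * b i with hz
    have hFz : f z = 0 := by
      have h2 : ((F y : ℚ) : ℝ) * b i = (F y) • b i := (Rat.smul_def _ _).symm
      have : F z = 0 := by
        rw [hz, map_sub, h2, LinearMap.map_smul]
        have h3 : F (b i) = 1 := by simp [hF, Module.Basis.coord_apply, Module.Basis.repr_self]
        rw [h3]; simp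
      simp [hfdef, this]
    have hzne : z ≠ 0 := by
      intro h
      apply hy
      exact ⟨F y, by rw [hz, sub_eq_zero] at h; exact h.symm⟩
    have := hall z
    rw [hFz] at this
    exact hzne (by
      rcases mul_eq_zero.1 this.symm with h | h
      · exact absurd h hs0
      · exact h)
  obtain ⟨x0, hx0⟩ := not_forall.1 hne
  -- f takes negative values on every interval
  have negdense : ∀ u v : ℝ, u < v → ∃ y ∈ Set.Ioo u v, f y < 0 := by
    intro u v huv
    set s : ℝ := f 1 with hs
    set c : ℝ := f x0 - s * x0 with hcdef
    have hc : c ≠ 0 := by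
      intro h
      apply hx0
      have : f x0 = s * x0 := by linarith [sub_eq_zero.1 h]
      exact this
    have hq : ∃ q : ℚ, (q : ℝ) * c < -(|s| * (|u| + |v|)) := by
      rcases lt_or_gt_of_ne hc with h | h
      · obtain ⟨q, hq⟩ := exists_rat_gt ((-(|s| * (|u| + |v|))) / c)
        exact ⟨q, by rwa [div_lt_iff_of_neg h] at hq⟩
      · obtain ⟨q, hq⟩ := exists_rat_lt ((-(|s| * (|u| + |v|))) / c)
        exact ⟨q, by rwa [lt_div_iff₀ h] at hq⟩
    obtain ⟨q, hqc⟩ := hq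
    obtain ⟨r, hr1, hr2⟩ := exists_rat_btwn (show u - (q : ℝ) * x0 < v - (q : ℝ) * x0 by linarith)
    set y : ℝ := (q : ℝ) * x0 + (r : ℝ) with hydef
    have hyI : y ∈ Set.Ioo u v := ⟨by rw [hydef]; linarith, by rw [hydef]; linarith⟩
    have hfy : f y = (q : ℝ) * c + s * y := by
      have h1 : f y = (q : ℝ) * f x0 + (r : ℝ) * s := by
        rw [hydef, hadd, hsmul]
        congr 1
        have : ((r : ℝ)) = (r : ℝ) * 1 := by ring
        rw [this, hsmul, hs]; ring
      rw [h1, hcdef, hydef]; ring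
    have hybound : |y| ≤ |u| + |v| := by
      rcases hyI with ⟨h1, h2⟩
      rw [abs_le]
      constructor
      · have := neg_abs_le u; nlinarith [abs_nonneg v]
      · have := le_abs_self v; nlinarith [abs_nonneg u]
    refine ⟨y, hyI, ?_⟩
    have h2 : s * y ≤ |s| * (|u| + |v|) := by
      calc s * y ≤ |s * y| := le_abs_self _
        _ = |s| * |y| := abs_mul s y
        _ ≤ |s| * (|u| + |v|) := by
            exact mul_le_mul_of_nonneg_left hybound (abs_nonneg s)
    rw [hfy]; linarith
  -- f is not continuous
  have hdiscont : ¬ Continuous f := by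
    intro hcont
    apply hx0
    have hmono : ∀ x : ℝ, f x = f 1 * x := by
      intro x
      let φ : ℝ →+ ℝ := AddMonoidHom.mk' f hadd
      have h := (φ.toRealLinearMap hcont).map_smul x (1 : ℝ)
      simp only [smul_eq_mul, mul_one] at h
      have happ : ∀ t : ℝ, (φ.toRealLinearMap hcont) t = f t := fun t => rfl
      rw [happ, happ] at h
      rw [h, mul_comm]
    exact hmono x0
  -- the set A
  set A : Set ℝ := {x | x ∈ Set.Icc (0 : ℝ) 1 ∧ f x ≤ 0} with hA
  have hAsub : A ⊆ Set.Icc 0 1 := fun x hx => hx.1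
  refine ⟨A, f, hAsub, ?_, hadd, ⟨0, fun a ha => ha.2⟩, hdiscont⟩
  -- volume A = 1
  have hIcc : volume (Set.Icc (0 : ℝ) 1) = 1 := by
    rw [Real.volume_Icc]; norm_num
  refine le_antisymm (by rw [← hIcc]; exact measure_mono hAsub) ?_
  by_contra hlt
  push_neg at hlt
  set E := toMeasurable volume A with hE
  set S := Set.Icc (0 : ℝ) 1 \ E with hSdef
  have hSm : MeasurableSet S := measurableSet_Icc.diff (measurableSet_toMeasurable _ _)
  have hS0 : volume S ≠ 0 := by
    intro h0
    have hsub : Set.Icc (0 : ℝ) 1 ⊆ E ∪ S := by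
      intro x hx
      by_cases hxE : x ∈ E
      · exact Or.inl hxE
      · exact Or.inr ⟨hx, hxE⟩
    have h1 : volume (Set.Icc (0 : ℝ) 1) ≤ volume E + volume S :=
      le_trans (measure_mono hsub) (measure_union_le _ _)
    rw [hIcc, h0, add_zero, hE, measure_toMeasurable] at h1
    exact absurd (lt_of_lt_of_le hlt h1) (lt_irrefl _)
  have hfpos : ∀ x ∈ S, 0 < f x := by
    intro x hx
    by_contra hnp
    push_neg at hnp
    exact hx.2 (subset_toMeasurable volume A ⟨hx.1, hnp⟩)
  obtain ⟨c, hc⟩ := exists_refl_inter_pos S hSm hS0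
  set E2 : Set ℝ := S ∩ (fun x : ℝ => c - x) ⁻¹' S with hE2
  have hE2m : MeasurableSet E2 :=
    hSm.inter (hSm.preimage (measurable_const.sub measurable_id))
  have hnhds : E2 - E2 ∈ nhds (0 : ℝ) :=
    MeasureTheory.Measure.sub_mem_nhds_zero_of_addHaar_pos volume E2 hE2m (pos_iff_ne_zero.2 hc)
  obtain ⟨ε, hε, hball⟩ := Metric.mem_nhds_iff.1 hnhds
  obtain ⟨y, hyI, hyneg⟩ := negdense (c - ε) (c + ε) (by linarith)
  have hymem : y - c ∈ E2 - E2 := by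
    apply hball
    simp only [Metric.mem_ball, Real.dist_eq, sub_zero]
    exact abs_lt.2 ⟨by linarith [hyI.1], by linarith [hyI.2]⟩
  obtain ⟨p, hp, q2, hq2, hpq⟩ := Set.mem_sub.1 hymem
  have hyeq : y = p + (c - q2) := by linarith
  have : 0 < f y := by
    rw [hyeq, hadd]
    exact add_pos (hfpos p hp.1) (hfpos (c - q2) hq2.2)
  linarith
end

section
/- There exist a set A ⊆ [0,1] such that A ∩ I is of second category (non-meagre) for every non-degenerate closed interval I ⊆ [0,1], and an additive function f : ℝ → ℝ that is bounded above on A and not continuous. (Hence A is not in the class BC.) -/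
open Set Filter

lemma isMeagre_iUnion' {X ι : Type*} [TopologicalSpace X] [Countable ι] {s : ι → Set X}
    (hs : ∀ i, IsMeagre (s i)) : IsMeagre (⋃ i, s i) := by
  rw [IsMeagre, compl_iUnion]
  exact (countable_iInter_mem).mpr hs

lemma IsMeagre.image_homeomorph {X Y : Type*} [TopologicalSpace X] [TopologicalSpace Y]
    (h : X ≃ₜ Y) {s : Set X} (hs : IsMeagre s) : IsMeagre (h '' s) := by
  rw [IsMeagre, ← h.residual_map_eq, Filter.mem_map]
  have : h ⁻¹' (h '' s)ᶜ = sᶜ := by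
    rw [preimage_compl, h.injective.preimage_image]
  rwa [this]

lemma IsMeagre.translate {s : Set ℝ} (c : ℝ) (hs : IsMeagre s) :
    IsMeagre ((fun x => c + x) '' s) :=
  hs.image_homeomorph (Homeomorph.addLeft c)

/-- **Theorem 3(vi).** There exist `A ⊆ [0,1]` with `A ∩ I` of second category for every
non-degenerate closed interval `I ⊆ [0,1]`, and an additive `f : ℝ → ℝ` bounded above on
`A` but not continuous (so `A ∉ BC`). -/
theorem second_category_not_BC :
    ∃ (A : Set ℝ) (f : ℝ → ℝ), A ⊆ Set.Icc 0 1 ∧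
      (∀ a b : ℝ, 0 ≤ a → a < b → b ≤ 1 → ¬ IsMeagre (A ∩ Set.Icc a b)) ∧
      (∀ x y : ℝ, f (x + y) = f x + f y) ∧
      (∃ B : ℝ, ∀ a ∈ A, f a ≤ B) ∧
      ¬ Continuous f := by
  classical
  set B := Module.Basis.ofVectorSpace ℚ ℝ with hB
  -- the index type is nontrivial
  have hcard : Cardinal.mk (Module.Basis.ofVectorSpaceIndex ℚ ℝ) = Cardinal.continuum := by
    rw [B.mk_eq_rank'', Real.rank_rat_real]
  have hnt : Nontrivial (Module.Basis.ofVectorSpaceIndex ℚ ℝ) := by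
    rw [← Cardinal.one_lt_iff_nontrivial, hcard]
    exact lt_trans Cardinal.one_lt_aleph0 Cardinal.aleph0_lt_continuum
  obtain ⟨i, j, hij⟩ := hnt
  set f₀ : ℝ →ₗ[ℚ] ℚ := B.coord i with hf₀
  set K : Submodule ℚ ℝ := LinearMap.ker f₀ with hK
  have hBj : (B j : ℝ) ∈ K := by
    simp only [hK, LinearMap.mem_ker, hf₀, Module.Basis.coord_apply, Module.Basis.repr_self]
    exact Finsupp.single_eq_of_ne hij
  have hBjne : (B j : ℝ) ≠ 0 := B.ne_zero j
  have hfBi : f₀ (B i) = 1 := by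
    simp [hf₀, Module.Basis.coord_apply, Module.Basis.repr_self]
  -- K is dense
  have hdense : Dense (K : Set ℝ) := by
    rcases AddSubgroup.dense_or_cyclic K.toAddSubgroup with h | ⟨a, ha⟩
    · exact h
    · exfalso
      have haK : a ∈ K := by
        have : a ∈ K.toAddSubgroup := ha ▸ AddSubgroup.subset_closure rfl
        exact this
      by_cases ha0 : a = 0
      · subst ha0
        rw [AddSubgroup.closure_singleton_zero] at ha
        have : (B j : ℝ) ∈ (⊥ : AddSubgroup ℝ) := ha ▸ hBj
        exact hBjne (by simpa using this)
      · have h2 : ((1:ℚ)/2) • a ∈ K.toAddSubgroup := K.smul_mem _ haK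
        rw [ha, AddSubgroup.mem_closure_singleton] at h2
        obtain ⟨n, hn⟩ := h2
        rw [zsmul_eq_mul, Rat.smul_def] at hn
        have : (n : ℝ) * a = (1/2 : ℝ) * a := by push_cast at hn ⊢; linarith
        have hcast : (n : ℝ) = 1/2 := mul_right_cancel₀ ha0 this
        have : ((2 * n : ℤ) : ℝ) = ((1 : ℤ) : ℝ) := by push_cast; linarith
        have := Int.cast_injective (α := ℝ) this
        omega
  -- K is not meagre
  have hKnm : ¬ IsMeagre (K : Set ℝ) := by
    intro hm
    have hcover : (univ : Set ℝ) ⊆ ⋃ q : ℚ, (fun x => (q • (B i : ℝ)) + x) '' (K : Set ℝ) := by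
      intro x _
      refine mem_iUnion.2 ⟨f₀ x, ⟨x - (f₀ x) • (B i : ℝ), ?_, by ring⟩⟩
      simp [hK, LinearMap.mem_ker, map_sub, map_smul, hfBi, smul_eq_mul]
    have : IsMeagre (univ : Set ℝ) :=
      (isMeagre_iUnion' (fun q : ℚ => (hm.translate _))).mono hcover
    have hd : Dense ((univ : Set ℝ)ᶜ) := dense_of_mem_residual this
    rw [compl_univ] at hd
    exact (hd.nonempty).ne_empty rfl
  -- K ∩ [a,b] is not meagre for any a < b
  have hKint : ∀ a b : ℝ, a < b → ¬ IsMeagre ((K : Set ℝ) ∩ Icc a b) := by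
    intro a b hab hm
    obtain ⟨D, hDK, hDc, hDd⟩ := hdense.exists_countable_dense_subset
    have : Countable D := hDc.to_subtype
    have hcover : (K : Set ℝ) ⊆
        ⋃ d : D, (fun x => (d : ℝ) + x) '' ((K : Set ℝ) ∩ Icc a b) := by
      intro x hx
      obtain ⟨d, hdD, hd⟩ : ∃ d ∈ D, d ∈ Ioo (x - b) (x - a) := by
        have hlt : x - b < x - a := by linarith
        exact hDd.exists_mem_open isOpen_Ioo (nonempty_Ioo.2 hlt)
      refine mem_iUnion.2 ⟨⟨d, hdD⟩, ⟨x - d, ⟨?_, ?_⟩, by ring⟩⟩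
      · exact K.sub_mem hx (hDK hdD)
      · constructor <;> [linarith [hd.2]; linarith [hd.1]]
    exact hKnm ((isMeagre_iUnion' (fun d : D => hm.translate _)).mono hcover)
  refine ⟨(K : Set ℝ) ∩ Icc 0 1, fun x => ((f₀ x : ℚ) : ℝ), inter_subset_right, ?_, ?_, ?_, ?_⟩
  · intro a b ha hab hb hm
    refine hKint a b hab (hm.mono ?_)
    intro x hx
    exact ⟨⟨hx.1, ⟨le_trans ha hx.2.1, le_trans hx.2.2 hb⟩⟩, hx.2⟩
  · intro x y; push_cast [map_add]; ring
  · refine ⟨0, fun x hx => ?_⟩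
    have : f₀ x = 0 := hx.1
    simp [this]
  · intro hc
    have heq : (fun x => ((f₀ x : ℚ) : ℝ)) = fun _ => (0 : ℝ) := by
      refine Continuous.ext_on hdense hc continuous_const ?_
      intro x hx
      have : f₀ x = 0 := hx
      simp [this]
    have := congrFun heq (B i)
    rw [hfBi] at this
    norm_num at this
end

section
/- Assume that for every family of fewer than 𝔠 (the cardinality of the continuum) subsets of ℝ, each of which is both meagre and Lebesgue-null, the union of the family is both meagre and Lebesgue-null. Then there exists a set A ⊆ ℝ such that d(A) = A − A = ℝ, A belongs to the class Emb, and A is not shift-compact. -/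
open Filter Topology MeasureTheory Pointwise

noncomputable section MOConstruction

open Cardinal Ordinal Set

/-- The symmetric "forbidden difference" set `{±1/(n+1)}`. -/
def Zset : Set ℝ := {z : ℝ | ∃ n : ℕ, z = 1 / ((n : ℝ) + 1) ∨ z = -(1 / ((n : ℝ) + 1))}

lemma Zset_countable : Zset.Countable := by
  have h : Zset ⊆ (Set.range fun n : ℕ => 1 / ((n : ℝ) + 1)) ∪
      (Set.range fun n : ℕ => -(1 / ((n : ℝ) + 1))) := by
    rintro z ⟨n, h | h⟩
    · exact Or.inl ⟨n, h.symm⟩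
    · exact Or.inr ⟨n, h.symm⟩
  exact ((Set.countable_range _).union (Set.countable_range _)).mono h

lemma mk_real_set_lt {S : Set ℝ} (h : #S < Cardinal.continuum) : ∃ x : ℝ, x ∉ S := by
  by_contra hc
  push_neg at hc
  have : S = Set.univ := Set.eq_univ_of_forall hc
  rw [this, Cardinal.mk_univ, Cardinal.mk_real] at h
  exact lt_irrefl _ h

/-- The "bad" set of points at a `Zset`-distance from `B`. -/
def Bad (B : Set ℝ) : Set ℝ := {x : ℝ | ∃ b ∈ B, x - b ∈ Zset}

lemma mk_Bad_lt {B : Set ℝ} (hB : #B < Cardinal.continuum) : #(Bad B) < Cardinal.continuum := by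
  have hsub : Bad B ⊆ Set.image2 (fun b z => b + z) B Zset := by
    rintro x ⟨b, hb, hz⟩
    exact ⟨b, hb, x - b, hz, by ring⟩
  calc #(Bad B) ≤ #(Set.image2 (fun b z => b + z) B Zset) := Cardinal.mk_le_mk_of_subset hsub
    _ ≤ #B * #Zset := Cardinal.mk_image2_le
    _ < Cardinal.continuum := by
        apply Cardinal.mul_lt_of_lt Cardinal.aleph0_le_continuum hB
        exact lt_of_le_of_lt Zset_countable.le_aleph0 Cardinal.aleph0_lt_continuum

/-- Index type for the transfinite construction: tasks. -/
abbrev Idx : Type := ℝ ⊕ Finset ℝ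

lemma mk_Idx : #Idx = Cardinal.continuum := by
  simp only [Cardinal.mk_sum, Cardinal.mk_real, Cardinal.mk_finset_of_infinite,
    Cardinal.lift_id]
  exact Cardinal.add_eq_self Cardinal.aleph0_le_continuum

/-- One step of the construction: a finite set fulfilling task `t` while avoiding
`Zset`-distances from a small set `B`. -/
lemma step_lemma (B : Set ℝ) (hB : #B < Cardinal.continuum) (t : Idx) :
    ∃ X : Finset ℝ,
      (∀ x ∈ X, x ∉ Bad B) ∧
      (∀ r : ℝ, t = Sum.inl r → ∃ x, x ∈ X ∧ x + r ∈ X) ∧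
      (∀ F : Finset ℝ, t = Sum.inr F → ∃ c : ℝ, ∀ v ∈ F, v + c ∈ X) := by
  have hBad := mk_Bad_lt hB
  cases t with
  | inl r =>
      have hsmall : #(Bad B ∪ (fun x => x + r) ⁻¹' Bad B : Set ℝ) < Cardinal.continuum := by
        refine lt_of_le_of_lt (Cardinal.mk_union_le _ _) ?_
        apply Cardinal.add_lt_of_lt Cardinal.aleph0_le_continuum hBad
        exact lt_of_le_of_lt
          (Cardinal.mk_preimage_of_injective _ _ (add_left_injective r)) hBad
      obtain ⟨x, hx⟩ := mk_real_set_lt hsmall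
      refine ⟨{x, x + r}, ?_, ?_, by simp⟩
      · intro y hy
        simp only [Finset.mem_insert, Finset.mem_singleton] at hy
        rcases hy with rfl | rfl
        · exact fun h => hx (Or.inl h)
        · exact fun h => hx (Or.inr h)
      · intro r' hr'
        obtain rfl : r' = r := by injection hr' with h; exact h.symm
        exact ⟨x, by simp, by simp⟩
  | inr F =>
      have hsmall : #(⋃ v : (F : Set ℝ), (fun c => (v : ℝ) + c) ⁻¹' Bad B : Set ℝ)
          < Cardinal.continuum := by
        refine lt_of_le_of_lt (Cardinal.mk_iUnion_le _) ?_
        apply Cardinal.mul_lt_of_lt Cardinal.aleph0_le_continuum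
        · exact lt_of_le_of_lt Cardinal.mk_le_aleph0 Cardinal.aleph0_lt_continuum
        · refine lt_of_le_of_lt (ciSup_le' fun v => ?_) hBad
          exact Cardinal.mk_preimage_of_injective _ _ (add_right_injective (v : ℝ))
      obtain ⟨c, hc⟩ := mk_real_set_lt hsmall
      refine ⟨F.image (fun v => v + c), ?_, by simp, ?_⟩
      · intro y hy hbad
        simp only [Finset.mem_image] at hy
        obtain ⟨v, hv, rfl⟩ := hy
        exact hc (Set.mem_iUnion.2 ⟨⟨v, by exact_mod_cast hv⟩, by
          simpa [add_comm] using hbad⟩)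
      · intro F' hF'
        obtain rfl : F' = F := by injection hF' with h; exact h.symm
        exact ⟨c, fun v hv => Finset.mem_image_of_mem _ hv⟩

/-- A well-order of `Idx` of minimal order type. -/
def wrel : Idx → Idx → Prop := (Cardinal.ord_eq Idx).choose

instance wrel_wo : IsWellOrder Idx wrel := (Cardinal.ord_eq Idx).choose_spec.choose

lemma type_wrel : (#Idx).ord = Ordinal.type wrel :=
  (Cardinal.ord_eq Idx).choose_spec.choose_spec

lemma small_pred (t : Idx) : #{s : Idx // wrel s t} < Cardinal.continuum := by
  rw [← mk_Idx, ← Ordinal.card_typein]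
  exact Cardinal.card_typein_lt (r := wrel) t type_wrel

lemma stage_small (t : Idx) (g : ∀ s : Idx, wrel s t → Finset ℝ) :
    #(⋃ s : {s : Idx // wrel s t}, ((g s.1 s.2 : Finset ℝ) : Set ℝ)) < Cardinal.continuum := by
  refine lt_of_le_of_lt (Cardinal.mk_iUnion_le _) ?_
  apply Cardinal.mul_lt_of_lt Cardinal.aleph0_le_continuum (small_pred t)
  refine lt_of_le_of_lt (ciSup_le' fun s => le_of_lt ?_) Cardinal.aleph0_lt_continuum
  exact (g s.1 s.2).finite_toSet.lt_aleph0

/-- The transfinite recursion producing, at each index, the finite set of points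
added at that stage. -/
def fstep : Idx → Finset ℝ :=
  WellFounded.fix (IsWellFounded.wf (α := Idx) (r := wrel))
    (fun t ih => (step_lemma _ (stage_small t ih) t).choose)

/-- All points added at earlier stages. -/
def Bset (t : Idx) : Set ℝ :=
  ⋃ s : {s : Idx // wrel s t}, ((fstep s.1 : Finset ℝ) : Set ℝ)

lemma fstep_eq (t : Idx) :
    fstep t = (step_lemma (Bset t) (stage_small t fun s _ => fstep s) t).choose :=
  WellFounded.fix_eq _ _ t

lemma fstep_spec (t : Idx) :
    (∀ x ∈ fstep t, x ∉ Bad (Bset t)) ∧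
      (∀ r : ℝ, t = Sum.inl r → ∃ x, x ∈ fstep t ∧ x + r ∈ fstep t) ∧
      (∀ F : Finset ℝ, t = Sum.inr F → ∃ c : ℝ, ∀ v ∈ F, v + c ∈ fstep t) := by
  rw [fstep_eq]
  exact (step_lemma (Bset t) (stage_small t fun s _ => fstep s) t).choose_spec

/-- No cross-stage difference lies in `Zset`. -/
lemma cross (s t : Idx) (h : wrel s t) :
    ∀ x ∈ fstep t, ∀ b ∈ fstep s, x - b ∉ Zset := by
  intro x hx b hb hz
  exact (fstep_spec t).1 x hx ⟨b, Set.mem_iUnion.2 ⟨⟨s, h⟩, hb⟩, hz⟩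

/-- The set constructed by the recursion. -/
def Aset : Set ℝ := ⋃ t : Idx, ((fstep t : Finset ℝ) : Set ℝ)

lemma z_injective : Function.Injective (fun n : ℕ => 1 / ((n : ℝ) + 1)) := by
  intro m n h
  simp only [one_div] at h
  have := inv_inj.mp h
  exact_mod_cast add_right_cancel this

lemma z_mem_Zset (n : ℕ) : (1 : ℝ) / ((n : ℝ) + 1) ∈ Zset := ⟨n, Or.inl rfl⟩

lemma neg_z_mem_Zset (n : ℕ) : -((1 : ℝ) / ((n : ℝ) + 1)) ∈ Zset := ⟨n, Or.inr rfl⟩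

end MOConstruction

/-- **Theorem MO** ([MilO, Th. 9], part used in Theorem 3(viii)). Assume that the union
of fewer than `𝔠` many sets, each meagre and Lebesgue-null, is itself meagre and null.
Then there exists `A ∈ Emb` with `d(A) = A - A = ℝ` which is not shift-compact. -/
theorem theoremMO_Emb_full_difference_not_SC
    (hsmall : ∀ S : Set (Set ℝ), Cardinal.mk S < Cardinal.continuum →
      (∀ s ∈ S, IsMeagre s ∧ volume s = 0) →
      IsMeagre (⋃₀ S) ∧ volume (⋃₀ S) = 0) :
    ∃ A : Set ℝ, A - A = Set.univ ∧ MemEmb A ∧ ¬ ShiftCompact A := by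
  clear hsmall
  refine ⟨Aset, ?_, ?_, ?_⟩
  · -- full difference set
    ext r
    simp only [Set.mem_univ, iff_true]
    obtain ⟨x, hx1, hx2⟩ := (fstep_spec (Sum.inl r)).2.1 r rfl
    exact Set.mem_sub.2 ⟨x + r, Set.mem_iUnion.2 ⟨Sum.inl r, hx2⟩,
      x, Set.mem_iUnion.2 ⟨Sum.inl r, hx1⟩, by ring⟩
  · -- Emb
    intro F hF
    obtain ⟨c, hc⟩ := (fstep_spec (Sum.inr hF.toFinset)).2.2 hF.toFinset rfl
    refine ⟨1, c, one_ne_zero, ?_⟩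
    rintro y ⟨x, hx, rfl⟩
    simp only [one_mul]
    exact Set.mem_iUnion.2 ⟨Sum.inr hF.toFinset,
      by exact_mod_cast hc x (hF.mem_toFinset.2 hx)⟩
  · -- not shift-compact
    intro hSC
    obtain ⟨a, ha, M, hMinf, hM⟩ :=
      hSC (fun n => 1 / ((n : ℝ) + 1)) tendsto_one_div_add_atTop_nhds_zero_nat
    obtain ⟨s, hs⟩ := Set.mem_iUnion.1 ha
    have key : ∀ m ∈ M, a + 1 / ((m : ℝ) + 1) ∈ (fstep s : Set ℝ) := by
      intro m hm
      obtain ⟨t, ht⟩ := Set.mem_iUnion.1 (hM m hm)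
      rcases trichotomous_of wrel t s with h | h | h
      · exfalso
        have := cross t s h a hs (a + 1 / ((m : ℝ) + 1)) ht
        exact this (by simpa using neg_z_mem_Zset m)
      · subst h; exact ht
      · exfalso
        have := cross s t h (a + 1 / ((m : ℝ) + 1)) ht a hs
        exact this (by simpa using z_mem_Zset m)
    have hsub : M ⊆ (fun m : ℕ => a + 1 / ((m : ℝ) + 1)) ⁻¹' ((fstep s : Finset ℝ) : Set ℝ) :=
      fun m hm => key m hm
    have hinj : Set.InjOn (fun m : ℕ => a + 1 / ((m : ℝ) + 1))
        ((fun m : ℕ => a + 1 / ((m : ℝ) + 1)) ⁻¹' ((fstep s : Finset ℝ) : Set ℝ)) := by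
      intro x _ y _ hxy
      exact z_injective (add_left_cancel hxy)
    exact hMinf (((fstep s).finite_toSet.preimage hinj).subset hsub)
end

section
/- If A ⊆ ℝ is shift-compact, then there exists δ > 0 such that the interval [0, δ) is contained in d(A) = A − A; in particular every shift-compact set belongs to the class SW. -/
/-! Shift-compactness makes every null sequence hit `A - A` infinitely often: if `a + z m ∈ A`
then `z m = (a + z m) - a`. Since `𝓝 0` is countably generated, a set met frequently by every
null sequence is a neighbourhood of `0`, so `A - A` contains an interval `(-δ, δ)`. -/

open Filter Topology Pointwise

namespace ShiftCompact

variable {A : Set ℝ}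

theorem frequently_mem_sub_self (hA : ShiftCompact A) {z : ℕ → ℝ}
    (hz : Tendsto z atTop (𝓝 0)) : ∃ᶠ n in atTop, z n ∈ A - A := by
  obtain ⟨a, ha, M, hM, hMA⟩ := hA z hz
  refine Nat.frequently_atTop_iff_infinite.2 (hM.mono fun m hm => ?_)
  exact ⟨a + z m, hMA m hm, a, ha, add_sub_cancel_left a (z m)⟩

theorem sub_self_mem_nhds_zero (hA : ShiftCompact A) : A - A ∈ 𝓝 (0 : ℝ) := by
  by_contra hnot
  obtain ⟨z, hz, hzA⟩ := exists_seq_forall_of_frequently (not_eventually.1 hnot)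
  obtain ⟨n, hn⟩ := (hA.frequently_mem_sub_self hz).exists
  exact hzA n hn

end ShiftCompact

/-- **Theorem 3(ix), first inclusion.** If `A ⊆ ℝ` is shift-compact, then `[0, δ) ⊆ A - A`
for some `δ > 0`; in particular every shift-compact set is in `SW`. -/
theorem SC_subset_SW (A : Set ℝ) (hA : ShiftCompact A) :
    ∃ δ : ℝ, 0 < δ ∧ Set.Ico 0 δ ⊆ A - A := by
  obtain ⟨δ, hδ, hball⟩ := Metric.mem_nhds_iff.1 hA.sub_self_mem_nhds_zero
  refine ⟨δ, hδ, fun t ht => hball ?_⟩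
  rw [Metric.mem_ball, Real.dist_0_eq_abs, abs_lt]
  exact ⟨by linarith [ht.1], ht.2⟩
end

section
/- If A ⊆ ℝ is shift-compact and f : ℝ → ℝ is an additive function that is bounded above on A, then f is continuous; in particular every shift-compact set belongs to the class BC. -/
open Filter Topology

/-- **Theorem 3(ix), second inclusion.** If `A ⊆ ℝ` is shift-compact and `f : ℝ → ℝ` is
additive and bounded above on `A`, then `f` is continuous; in particular every
shift-compact set is in `BC`. -/
theorem SC_subset_BC (A : Set ℝ) (hA : ShiftCompact A)
    (f : ℝ → ℝ) (hadd : ∀ x y : ℝ, f (x + y) = f x + f y)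
    (hbdd : ∃ B : ℝ, ∀ a ∈ A, f a ≤ B) :
    Continuous f := by
  set g : ℝ →+ ℝ := AddMonoidHom.mk' f hadd with hg
  have hgf : ∀ x, g x = f x := fun x => rfl
  have hf0 : f 0 = 0 := g.map_zero
  have hnsmul : ∀ (k : ℕ) (x : ℝ), f ((k : ℝ) * x) = (k : ℝ) * f x := by
    intro k x
    induction k with
    | zero => simp [hf0]
    | succ n ih =>
      push_cast
      rw [add_mul, one_mul, hadd, ih, add_mul, one_mul]
  have hneg : ∀ x, f (-x) = - f x := fun x => g.map_neg x
  suffices hc0 : ContinuousAt f 0 by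
    have : ContinuousAt g 0 := hc0
    exact continuous_of_continuousAt_zero g this
  by_contra hnot
  rw [Metric.continuousAt_iff] at hnot
  push_neg at hnot
  obtain ⟨ε, hε, H⟩ := hnot
  set k : ℕ → ℕ := fun n => ⌈(n : ℝ) / ε⌉₊ with hk
  have H' : ∀ n : ℕ, ∃ x : ℝ, |x| < 1 / (((n : ℝ) + 1) * ((k n : ℝ) + 1)) ∧ ε ≤ |f x| := by
    intro n
    have hpos : (0:ℝ) < 1 / (((n : ℝ) + 1) * ((k n : ℝ) + 1)) := by positivity
    obtain ⟨x, hx1, hx2⟩ := H _ hpos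
    refine ⟨x, ?_, ?_⟩
    · simpa [Real.dist_eq] using hx1
    · simpa [Real.dist_eq, hf0] using hx2
  choose x hx1 hx2 using H'
  set z : ℕ → ℝ := fun n => (if 0 ≤ f (x n) then ((k n : ℝ)) else -(k n)) * x n with hz
  have habs : ∀ n, |z n| ≤ 1 / ((n : ℝ) + 1) := by
    intro n
    have h1 : |z n| ≤ ((k n : ℝ) + 1) * |x n| := by
      rw [hz, abs_mul]
      apply mul_le_mul_of_nonneg_right _ (abs_nonneg _)
      split <;> simp [abs_of_nonneg] <;> linarith [Nat.cast_nonneg (α := ℝ) (k n)]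
    have h2 : ((k n : ℝ) + 1) * |x n| ≤ ((k n : ℝ) + 1) * (1 / (((n : ℝ) + 1) * ((k n : ℝ) + 1))) := by
      apply mul_le_mul_of_nonneg_left (le_of_lt (hx1 n))
      positivity
    have h3 : ((k n : ℝ) + 1) * (1 / (((n : ℝ) + 1) * ((k n : ℝ) + 1))) = 1 / ((n : ℝ) + 1) := by
      field_simp
    linarith
  have hztend : Tendsto z atTop (𝓝 0) := by
    apply squeeze_zero_norm (fun n => by simpa [Real.norm_eq_abs] using habs n)
    simpa [one_div] using tendsto_one_div_add_atTop_nhds_zero_nat (𝕜 := ℝ)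
  have hfz : ∀ n : ℕ, (n : ℝ) ≤ f (z n) := by
    intro n
    have hkε : (n : ℝ) ≤ (k n : ℝ) * ε := by
      have := Nat.le_ceil ((n : ℝ) / ε)
      rw [div_le_iff₀ hε] at this
      exact this
    by_cases hs : 0 ≤ f (x n)
    · have hε' : ε ≤ f (x n) := by
        have := hx2 n
        rwa [abs_of_nonneg hs] at this
      have : f (z n) = (k n : ℝ) * f (x n) := by
        rw [hz]; simp only [hs, if_pos]; exact hnsmul (k n) (x n)
      rw [this]
      calc (n : ℝ) ≤ (k n : ℝ) * ε := hkε
        _ ≤ (k n : ℝ) * f (x n) := by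
            apply mul_le_mul_of_nonneg_left hε' (Nat.cast_nonneg _)
    · push_neg at hs
      have hε' : ε ≤ - f (x n) := by
        have := hx2 n
        rwa [abs_of_neg hs] at this
      have : f (z n) = (k n : ℝ) * (- f (x n)) := by
        rw [hz]; simp only [hs.not_ge, if_neg, not_false_iff]
        rw [neg_mul, ← neg_mul_comm, hneg, hnsmul, neg_mul_comm, mul_neg]
      rw [this]
      calc (n : ℝ) ≤ (k n : ℝ) * ε := hkε
        _ ≤ (k n : ℝ) * (- f (x n)) := by
            apply mul_le_mul_of_nonneg_left hε' (Nat.cast_nonneg _)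
  obtain ⟨a, haA, M, hMinf, hM⟩ := hA z hztend
  obtain ⟨B, hB⟩ := hbdd
  obtain ⟨m, hmM, hmgt⟩ := hMinf.exists_gt ⌈B - f a⌉₊
  have h1 : f a + f (z m) ≤ B := by
    have := hB _ (hM m hmM)
    rwa [hadd] at this
  have h2 : (m : ℝ) ≤ f (z m) := hfz m
  have h3 : B - f a ≤ (⌈B - f a⌉₊ : ℝ) := Nat.le_ceil _
  have h4 : ((⌈B - f a⌉₊ : ℕ) : ℝ) < (m : ℝ) := by exact_mod_cast hmgt
  linarith
end

section
/- Let S ⊆ ℝ be a Sierpiński set and let {z_n}_{n∈ℕ} be a null sequence in ℝ. Then the set {t ∈ ℝ : t + z_n ∉ S for all n ∈ ℕ} is co-meagre; i.e. for all t outside a meagre set, t + z_n lies in ℝ \ S for every n. -/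
open Filter Topology MeasureTheory

lemma countable_isMeagre {c : Set ℝ} (hc : c.Countable) : IsMeagre c := by
  rw [isMeagre_iff_countable_union_isNowhereDense]
  refine ⟨(fun x => {x}) '' c, ?_, hc.image _, ?_⟩
  · rintro t ⟨x, -, rfl⟩
    exact (isClosed_singleton).isNowhereDense_iff.mpr (by simp)
  · intro x hx
    exact ⟨{x}, ⟨x, hx, rfl⟩, rfl⟩

/-- **Proposition 3.** If `S ⊆ ℝ` is a Sierpiński set (uncountable, meeting every
Lebesgue-null set in a countable set) and `z_n → 0` is a null sequence, then for quasi
all `t` (all `t` outside a meagre set) one has `t + z_n ∉ S` for all `n`: the set of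
exceptional `t` is meagre. -/
theorem sierpinski_complement_shift (S : Set ℝ)
    (hS_unc : ¬ S.Countable)
    (hS : ∀ N : Set ℝ, volume N = 0 → (S ∩ N).Countable)
    (z : ℕ → ℝ) (hz : Tendsto z atTop (𝓝 0)) :
    IsMeagre {t : ℝ | ∃ n : ℕ, t + z n ∈ S} := by
  -- obtain a comeagre null set
  obtain ⟨u, hu, v, hv, huv⟩ := Filter.disjoint_iff.mp Real.disjoint_residual_ae
  -- vᶜ is null
  have hvnull : volume vᶜ = 0 := by
    exact mem_ae_iff.mp hv
  -- S is meagre: S ⊆ (S ∩ vᶜ) ∪ uᶜ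
  have hSm : IsMeagre S := by
    have h1 : IsMeagre (S ∩ vᶜ) := countable_isMeagre (hS _ hvnull)
    have h2 : IsMeagre uᶜ := by simpa [IsMeagre] using hu
    have h3 : IsMeagre ((S ∩ vᶜ) ∪ uᶜ) := by
      rw [IsMeagre, Set.compl_union]
      exact Filter.inter_mem h1 h2
    refine h3.mono fun x hx => ?_
    by_cases hxv : x ∈ v
    · exact Or.inr fun hxu => huv.le_bot ⟨hxu, hxv⟩
    · exact Or.inl ⟨hx, hxv⟩
  have : {t : ℝ | ∃ n : ℕ, t + z n ∈ S} = ⋃ n, (fun t => t + z n) ⁻¹' S := by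
    ext t; simp
  rw [this]
  refine isMeagre_iUnion fun n => ?_
  exact hSm.preimage_of_isOpenMap (continuous_add_right _) (isOpenMap_add_right _)
end
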